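/- arXiv:1710.11574 — 7 statements merged into one kernel-verified Lean document; each statement's English description precedes it below -/
import Mathlib

section
/- Let S be a local ring with involution * in which 2 is a unit, and let A = M(m,S) with the induced involution (conjugate transpose). If a, c ∈ A satisfy Aa + Ac = A and a*c = c*a, then there exists a *-symmetric r ∈ A (r* = r) such that a + rc is a unit of A. -/
/-!
Induction on the size `m`. Two changes of the pair preserve both hypotheses and transport a
solution back: `(a, c) ↦ (u a g, u⋆⁻¹ c g)` for units `u, g` (with `r ↦ u⁻¹ r u⋆⁻¹`), and
`(a, c) ↦ (a + s c, c)` for self-adjoint `s` (with `r ↦ s + r`). Over a local ring the first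
column of `x a + y c = 1` forces a unit entry in the first column of `a` or of `c`; adding
`s = E_kk` moves it into `a`, and Gaussian elimination then brings `a` to `diag(1, a')`.
For this `a`, isotropy reads `c₁₂ = c₂₁⋆ a'` and `a'⋆ c₂₂ = c₂₂⋆ a'`, which makes `(a', c₂₂)`
again a unimodular isotropic pair. If `a' + s c₂₂` is a unit, then so is the block lower
triangular matrix `a + diag(0, s) c`.
-/

open Matrix

section StarRing

variable {R : Type*} [Ring R] [StarRing R]

/-- Isotropy is with respect to the hyperbolic form `⟨(a, c), (a', c')⟩ = a⋆ c' - c⋆ a'`. -/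
structure IsUnimodularIsotropic (a c : R) : Prop where
  unimodular : ∃ x y : R, x * a + y * c = 1
  isotropic : star a * c = star c * a

def SymmetricStableRangeOne (R : Type*) [Ring R] [StarRing R] : Prop :=
  ∀ a c : R, IsUnimodularIsotropic a c → ∃ r : R, IsSelfAdjoint r ∧ IsUnit (a + r * c)

namespace IsUnimodularIsotropic

variable {a c : R}

theorem units_mul (h : IsUnimodularIsotropic a c) (u g : Rˣ) :
    IsUnimodularIsotropic (u * a * g) (star ↑u⁻¹ * c * g) := by
  have hu : star (u : R) * star ↑u⁻¹ = 1 := by rw [← star_mul, u.inv_mul, star_one]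
  obtain ⟨x, y, hxy⟩ := h.unimodular
  constructor
  · refine ⟨↑g⁻¹ * x * ↑u⁻¹, ↑g⁻¹ * y * star (u : R), ?_⟩
    calc ↑g⁻¹ * x * ↑u⁻¹ * (u * a * g) + ↑g⁻¹ * y * star (u : R) * (star ↑u⁻¹ * c * g)
        = ↑g⁻¹ * (x * (↑u⁻¹ * u) * a + y * (star (u : R) * star ↑u⁻¹) * c) * g := by
          noncomm_ring
      _ = 1 := by rw [u.inv_mul, hu, mul_one, mul_one, hxy, mul_one, g.inv_mul]
  · calc star (u * a * g) * (star ↑u⁻¹ * c * g)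
        = star (g : R) * star a * (star (u : R) * star ↑u⁻¹) * c * g := by
          simp only [star_mul, mul_assoc]
      _ = star (g : R) * (star a * c) * g := by rw [hu, mul_one]; simp only [mul_assoc]
      _ = star (g : R) * star c * (↑u⁻¹ * u) * a * g := by
          rw [h.isotropic, u.inv_mul, mul_one]; simp only [mul_assoc]
      _ = star (star ↑u⁻¹ * c * g) * (u * a * g) := by
          simp only [star_mul, star_star, mul_assoc]

theorem add_mul_right (h : IsUnimodularIsotropic a c) {s : R} (hs : IsSelfAdjoint s) :
    IsUnimodularIsotropic (a + s * c) c := by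
  obtain ⟨x, y, hxy⟩ := h.unimodular
  refine ⟨⟨x, y - x * s, by rw [← hxy]; noncomm_ring⟩, ?_⟩
  rw [star_add, star_mul, hs.star_eq, add_mul, mul_add, h.isotropic, mul_assoc]

theorem map {R' F : Type*} [Ring R'] [StarRing R'] [FunLike F R R'] [RingHomClass F R R']
    [StarHomClass F R R'] (h : IsUnimodularIsotropic a c) (f : F) :
    IsUnimodularIsotropic (f a) (f c) := by
  obtain ⟨x, y, hxy⟩ := h.unimodular
  refine ⟨⟨f x, f y, by rw [← map_mul, ← map_mul, ← map_add, hxy, map_one]⟩, ?_⟩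
  rw [← map_star, ← map_star, ← map_mul, ← map_mul, h.isotropic]

end IsUnimodularIsotropic

variable {a c : R}

theorem exists_isSelfAdjoint_isUnit_of_units_mul (u g : Rˣ)
    (h : ∃ r : R, IsSelfAdjoint r ∧ IsUnit (u * a * g + r * (star ↑u⁻¹ * c * g))) :
    ∃ r : R, IsSelfAdjoint r ∧ IsUnit (a + r * c) := by
  obtain ⟨r, hr, hunit⟩ := h
  refine ⟨↑u⁻¹ * r * star ↑u⁻¹, hr.conjugate _, ?_⟩
  have : a + ↑u⁻¹ * r * star ↑u⁻¹ * c =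
      ↑u⁻¹ * (u * a * g + r * (star ↑u⁻¹ * c * g)) * ↑g⁻¹ := by
    calc a + ↑u⁻¹ * r * star ↑u⁻¹ * c
        = ↑u⁻¹ * u * a * (g * ↑g⁻¹) + ↑u⁻¹ * r * star ↑u⁻¹ * c * (g * ↑g⁻¹) := by
          rw [u.inv_mul, g.mul_inv]; noncomm_ring
      _ = _ := by noncomm_ring
  rw [this]
  exact (u⁻¹.isUnit.mul hunit).mul g⁻¹.isUnit

theorem exists_isSelfAdjoint_isUnit_of_add_mul_right {s : R} (hs : IsSelfAdjoint s)
    (h : ∃ r : R, IsSelfAdjoint r ∧ IsUnit (a + s * c + r * c)) :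
    ∃ r : R, IsSelfAdjoint r ∧ IsUnit (a + r * c) := by
  obtain ⟨r, hr, hunit⟩ := h
  exact ⟨s + r, hs.add hr, by rwa [add_mul, ← add_assoc]⟩

theorem SymmetricStableRangeOne.of_starRingEquiv {R' : Type*} [Ring R'] [StarRing R']
    (f : R ≃⋆+* R') (h : SymmetricStableRangeOne R') : SymmetricStableRangeOne R := by
  intro a c hac
  obtain ⟨r, hr, hunit⟩ := h _ _ (hac.map f)
  refine ⟨f.symm r, ?_, ?_⟩
  · rw [IsSelfAdjoint, ← map_star, hr.star_eq]
  · rw [← isUnit_map_iff f, map_add, map_mul, f.apply_symm_apply]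
    exact hunit

end StarRing

/-- `b * a` is idempotent, and the only idempotents of a local ring are `0` and `1`. -/
instance IsLocalRing.isDedekindFiniteMonoid {R : Type*} [Ring R] [IsLocalRing R] :
    IsDedekindFiniteMonoid R where
  mul_eq_one_symm {a b} hab := by
    have he : IsIdempotentElem (b * a) := by
      rw [IsIdempotentElem, mul_assoc, ← mul_assoc a, hab, one_mul]
    rcases IsLocalRing.isUnit_or_isUnit_of_add_one (add_sub_cancel (b * a) 1) with h | h
    · exact (IsIdempotentElem.iff_eq_one_of_isUnit h).1 he
    · have hba : b * a = 0 := by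
        simpa using (IsIdempotentElem.iff_eq_one_of_isUnit h).1 he.one_sub
      refine absurd ?_ (one_ne_zero (α := R))
      calc (1 : R) = a * b * (a * b) := by rw [hab, one_mul]
        _ = a * (b * a) * b := by noncomm_ring
        _ = 0 := by rw [hba, mul_zero, zero_mul]

namespace Matrix

variable {S : Type*} [Ring S] {m n : Type*} [Fintype m] [Fintype n] [DecidableEq m]
  [DecidableEq n]

theorem isUnit_fromBlocks_zero₁₂_of_isUnit {A : Matrix m m S} {D : Matrix n n S}
    (C : Matrix n m S) (hA : IsUnit A) (hD : IsUnit D) : IsUnit (fromBlocks A 0 C D) := by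
  obtain ⟨A, rfl⟩ := hA
  obtain ⟨D, rfl⟩ := hD
  refine isUnit_iff_exists.2
    ⟨fromBlocks ↑A⁻¹ 0 (-((↑D⁻¹ : Matrix n n S) * C * (↑A⁻¹ : Matrix m m S))) ↑D⁻¹, ?_, ?_⟩
  · simp [fromBlocks_multiply, ← Matrix.mul_assoc]
  · simp [fromBlocks_multiply, Matrix.mul_assoc]

theorem isUnit_fromBlocks_one_zero_one (B : Matrix m n S) :
    IsUnit (fromBlocks (1 : Matrix m m S) B 0 (1 : Matrix n n S)) :=
  isUnit_iff_exists.2 ⟨fromBlocks 1 (-B) 0 1, by simp [fromBlocks_multiply],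
    by simp [fromBlocks_multiply]⟩

theorem exists_units_mul_fromBlocks_mul_eq (A : (Matrix m m S)ˣ) (B : Matrix m n S)
    (C : Matrix n m S) (D : Matrix n n S) :
    ∃ L U : (Matrix (m ⊕ n) (m ⊕ n) S)ˣ,
      (L : Matrix (m ⊕ n) (m ⊕ n) S) * fromBlocks ↑A B C D * (U : Matrix (m ⊕ n) (m ⊕ n) S) =
        fromBlocks 1 0 0 (D - C * (↑A⁻¹ : Matrix m m S) * B) := by
  obtain ⟨L, hL⟩ := isUnit_fromBlocks_zero₁₂_of_isUnit (-(C * (↑A⁻¹ : Matrix m m S)))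
    A⁻¹.isUnit (isUnit_one (M := Matrix n n S))
  obtain ⟨U, hU⟩ := isUnit_fromBlocks_one_zero_one (-((↑A⁻¹ : Matrix m m S) * B))
  refine ⟨L, U, ?_⟩
  rw [hL, hU, fromBlocks_multiply, fromBlocks_multiply]
  simp [Matrix.mul_assoc, sub_eq_neg_add]

theorem isUnit_of_isUnit_apply [Unique m] {A : Matrix m m S}
    (h : IsUnit (A default default)) : IsUnit A := by
  have : A = scalar m (A default default) := by
    ext i j
    simp [Subsingleton.elim i default, Subsingleton.elim j default]
  rw [this]
  exact h.map _

theorem exists_units_mul_mul_eq_fromBlocks_one [Unique m] {a : Matrix (m ⊕ n) (m ⊕ n) S}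
    {k : m ⊕ n} (hk : IsUnit (a k (Sum.inl default))) :
    ∃ (u g : (Matrix (m ⊕ n) (m ⊕ n) S)ˣ) (a' : Matrix n n S),
      (u : Matrix (m ⊕ n) (m ⊕ n) S) * a * (g : Matrix (m ⊕ n) (m ⊕ n) S) =
        fromBlocks 1 0 0 a' := by
  let P : (Matrix (m ⊕ n) (m ⊕ n) S)ˣ :=
    ⟨swap S (Sum.inl default) k, swap S (Sum.inl default) k, swap_mul_self _ _,
      swap_mul_self _ _⟩
  set a₁ := (P : Matrix (m ⊕ n) (m ⊕ n) S) * a with ha₁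
  obtain ⟨A, hA⟩ : IsUnit a₁.toBlocks₁₁ := by
    apply isUnit_of_isUnit_apply
    simpa [a₁, P, toBlocks₁₁] using hk
  obtain ⟨L, U, hLU⟩ :=
    exists_units_mul_fromBlocks_mul_eq A a₁.toBlocks₁₂ a₁.toBlocks₂₁ a₁.toBlocks₂₂
  refine ⟨L * P, U, _, Eq.trans ?_ hLU⟩
  rw [hA, fromBlocks_toBlocks, Units.val_mul]
  simp only [ha₁, mul_assoc]

section LocalRing

variable [IsLocalRing S]

theorem exists_isUnit_apply_of_mul_add_mul_eq_one {a c x y : Matrix m m S}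
    (hxy : x * a + y * c = 1) (j : m) : ∃ k, IsUnit (a k j) ∨ IsUnit (c k j) := by
  have hsum : IsUnit (∑ k, (x j k * a k j + y j k * c k j)) := by
    rw [Finset.sum_add_distrib, ← mul_apply, ← mul_apply, ← add_apply, hxy, one_apply_eq]
    exact isUnit_one
  obtain ⟨k, -, hk⟩ := IsLocalRing.exists_of_isUnit_sum hsum
  exact ⟨k, (IsLocalRing.isUnit_or_isUnit_of_isUnit_add hk).imp
    isUnit_of_mul_isUnit_right isUnit_of_mul_isUnit_right⟩

theorem exists_isSelfAdjoint_isUnit_add_mul_apply [StarRing S] {a c x y : Matrix m m S}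
    (hxy : x * a + y * c = 1) (j : m) :
    ∃ s : Matrix m m S, IsSelfAdjoint s ∧ ∃ k, IsUnit ((a + s * c) k j) := by
  obtain ⟨k, hk⟩ := exists_isUnit_apply_of_mul_add_mul_eq_one hxy j
  by_cases ha : IsUnit (a k j)
  · exact ⟨0, .zero _, k, by simpa using ha⟩
  refine ⟨single k k 1, ?_, k, ?_⟩
  · rw [IsSelfAdjoint, star_eq_conjTranspose, conjTranspose_single, star_one]
  · have hc : IsUnit (c k j) := hk.resolve_left ha
    rw [add_apply, single_mul_apply_same, one_mul]
    by_contra hac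
    have hna : -a k j ∈ nonunits S := by rwa [mem_nonunits_iff, IsUnit.neg_iff]
    exact IsLocalRing.nonunits_add hac hna (by rwa [add_neg_cancel_comm])

end LocalRing

variable [StarRing S]

theorem exists_isSelfAdjoint_isUnit_fromBlocks_one_add_mul
    (hn : SymmetricStableRangeOne (Matrix n n S)) {a' : Matrix n n S}
    {c : Matrix (m ⊕ n) (m ⊕ n) S} (h : IsUnimodularIsotropic (fromBlocks 1 0 0 a') c) :
    ∃ r, IsSelfAdjoint r ∧ IsUnit (fromBlocks 1 0 0 a' + r * c) := by
  obtain ⟨c₁₁, c₁₂, c₂₁, c₂₂, rfl⟩ : ∃ c₁₁ c₁₂ c₂₁ c₂₂, c = fromBlocks c₁₁ c₁₂ c₂₁ c₂₂ :=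
    ⟨_, _, _, _, (fromBlocks_toBlocks c).symm⟩
  obtain ⟨x, y, hxy⟩ := h.unimodular
  obtain ⟨x₁₁, x₁₂, x₂₁, x₂₂, rfl⟩ : ∃ x₁₁ x₁₂ x₂₁ x₂₂, x = fromBlocks x₁₁ x₁₂ x₂₁ x₂₂ :=
    ⟨_, _, _, _, (fromBlocks_toBlocks x).symm⟩
  obtain ⟨y₁₁, y₁₂, y₂₁, y₂₂, rfl⟩ : ∃ y₁₁ y₁₂ y₂₁ y₂₂, y = fromBlocks y₁₁ y₁₂ y₂₁ y₂₂ :=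
    ⟨_, _, _, _, (fromBlocks_toBlocks y).symm⟩
  have hiso := h.isotropic
  simp only [star_eq_conjTranspose, fromBlocks_conjTranspose, fromBlocks_multiply,
    conjTranspose_one, conjTranspose_zero, fromBlocks_inj, Matrix.one_mul, Matrix.mul_one,
    Matrix.zero_mul, Matrix.mul_zero, add_zero, zero_add] at hiso
  obtain ⟨-, hc₁₂, -, hc₂₂⟩ := hiso
  simp only [fromBlocks_multiply, fromBlocks_add, ← fromBlocks_one, fromBlocks_inj,
    Matrix.mul_one, Matrix.mul_zero, add_zero, zero_add] at hxy
  obtain ⟨-, -, -, hxy₂₂⟩ := hxy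
  obtain ⟨s, hs, hunit⟩ := hn a' c₂₂ ⟨⟨x₂₂ + y₂₁ * c₂₁ᴴ, y₂₂, by
    rw [Matrix.add_mul, Matrix.mul_assoc, ← hc₁₂, add_assoc, hxy₂₂]⟩, hc₂₂⟩
  refine ⟨fromBlocks 0 0 0 s, ?_, ?_⟩
  · have hs' : sᴴ = s := hs
    simp only [IsSelfAdjoint, star_eq_conjTranspose, fromBlocks_conjTranspose, hs',
      conjTranspose_zero]
  · rw [fromBlocks_multiply, fromBlocks_add]
    simp only [Matrix.zero_mul, add_zero, zero_add]
    exact isUnit_fromBlocks_zero₁₂_of_isUnit _ isUnit_one hunit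

def reindexStarRingEquiv (e : m ≃ n) : Matrix m m S ≃⋆+* Matrix n n S :=
  { reindexRingEquiv S e with map_star' := fun M => (conjTranspose_reindex e e M).symm }

end Matrix

namespace SymmetricStableRangeOne

variable {S : Type*} [Ring S] [StarRing S] [IsLocalRing S]

theorem matrix_sum {m n : Type*} [Fintype m] [DecidableEq m] [Unique m] [Fintype n]
    [DecidableEq n] (h : SymmetricStableRangeOne (Matrix n n S)) :
    SymmetricStableRangeOne (Matrix (m ⊕ n) (m ⊕ n) S) := by
  intro a c hac
  obtain ⟨x, y, hxy⟩ := hac.unimodular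
  obtain ⟨s, hs, k, hk⟩ := exists_isSelfAdjoint_isUnit_add_mul_apply hxy (Sum.inl default)
  obtain ⟨u, g, a', hpivot⟩ := exists_units_mul_mul_eq_fromBlocks_one hk
  apply exists_isSelfAdjoint_isUnit_of_add_mul_right hs
  apply exists_isSelfAdjoint_isUnit_of_units_mul u g
  have hpair := (hac.add_mul_right hs).units_mul u g
  rw [hpivot] at hpair ⊢
  exact exists_isSelfAdjoint_isUnit_fromBlocks_one_add_mul h hpair

theorem matrix_fin : ∀ m : ℕ, SymmetricStableRangeOne (Matrix (Fin m) (Fin m) S)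
  | 0 => fun _ _ _ => ⟨0, .zero _, isUnit_of_subsingleton _⟩
  | m + 1 => (matrix_sum (m := Fin 1) (matrix_fin m)).of_starRingEquiv
      (reindexStarRingEquiv ((finCongr (add_comm m 1)).trans finSumFinEquiv.symm))

end SymmetricStableRangeOne

theorem stmt4_general {S : Type*} [Ring S] [StarRing S] [IsLocalRing S]
    (m : ℕ) (a c : Matrix (Fin m) (Fin m) S)
    (hcoprime : ∃ x y : Matrix (Fin m) (Fin m) S, x * a + y * c = 1)
    (hac : star a * c = star c * a) :
    ∃ r : Matrix (Fin m) (Fin m) S, star r = r ∧ IsUnit (a + r * c) :=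
  SymmetricStableRangeOne.matrix_fin m a c ⟨hcoprime, hac⟩

/-- `S` local with involution, `2 ∈ S^×`, `A = M(m,S)` with conjugate
transpose involution.  If `Aa + Ac = A` and `a* c = c* a` then there is a `*`-symmetric
`r ∈ A` with `a + r c` a unit. -/
theorem stmt4 {S : Type*} [Ring S] [StarRing S] [IsLocalRing S]
    (h2 : IsUnit (2 : S)) (m : ℕ) (a c : Matrix (Fin m) (Fin m) S)
    (hcoprime : ∃ x y : Matrix (Fin m) (Fin m) S, x * a + y * c = 1)
    (hac : star a * c = star c * a) :
    ∃ r : Matrix (Fin m) (Fin m) S, star r = r ∧ IsUnit (a + r * c) :=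
  stmt4_general m a c hcoprime hac
end

section
/- Let S be a local ring with involution * in which 2 is a unit, and A = M(m,S). Then SL_*(2,A) has a Bruhat decomposition of length 2: every element lies in B ∪ BwB ∪ BwBwB, where B = DN is generated by the diagonal elements h_t = diag(t, (t*)⁻¹) for t ∈ A^× and the unipotent elements u_r = (1 r; 0 1) for r ∈ A^s, and w = (0 1; -1 0). -/
set_option maxHeartbeats 2000000

section BruhatDefs

variable {A : Type*} [Ring A] [StarRing A]

/-- The Weyl element `w = (0 1; -1 0)`. -/
def wElt : Matrix (Fin 2) (Fin 2) A := !![0, 1; -1, 0]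

/-- The diagonal Bruhat element `h_t = diag(t, (t*)⁻¹)` for a unit `t`. -/
def hElt (t : Aˣ) : Matrix (Fin 2) (Fin 2) A := !![(t : A), 0; 0, (((star t)⁻¹ : Aˣ) : A)]

/-- The unipotent Bruhat element `u_r = (1 r; 0 1)`. -/
def uElt (r : A) : Matrix (Fin 2) (Fin 2) A := !![1, r; 0, 1]

/-- Membership in the Borel subgroup `B = DN`. -/
def InBorel (x : Matrix (Fin 2) (Fin 2) A) : Prop :=
  ∃ (t : Aˣ) (r : A), star r = r ∧ x = hElt t * uElt r

end BruhatDefs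


section LocalRing
variable {S : Type*} [Ring S] [IsLocalRing S]

/-- In a local ring, a one-sided inverse relation makes both factors units. -/
lemma loc_units_of_mul_eq_one {a b : S} (h : a * b = 1) : IsUnit a ∧ IsUnit b := by
  have key : b * a = 1 := by
    rcases IsLocalRing.isUnit_or_isUnit_of_add_one
        (a := b * a) (b := 1 - b * a) (by abel) with hu | hu
    · -- b*a is a unit and idempotent
      have hidem : (b * a) * (b * a) = b * a := by
        calc (b * a) * (b * a) = b * (a * b) * a := by noncomm_ring
        _ = b * a := by rw [h, mul_one]
      obtain ⟨u, hu⟩ := hu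
      have h1 : (↑u⁻¹ : S) * ((b * a) * (b * a)) = (↑u⁻¹ : S) * (b * a) := by rw [hidem]
      rw [← hu, ← mul_assoc, Units.inv_mul, one_mul] at h1
      rw [← hu]; exact h1
    · exfalso
      have h0 : a * (1 - b * a) = 0 := by
        have h1 : a * (b * a) = a := by rw [← mul_assoc, h, one_mul]
        rw [mul_sub, mul_one, h1, sub_self]
      obtain ⟨u, hu⟩ := hu
      have ha0 : a = 0 := by
        have h1 : a * ((1 - b * a) * ↑u⁻¹) = 0 := by rw [← mul_assoc, h0, zero_mul]
        rw [← hu, Units.mul_inv, mul_one] at h1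
        exact h1
      rw [ha0, zero_mul] at h
      exact one_ne_zero h.symm
  exact ⟨⟨⟨a, b, h, key⟩, rfl⟩, ⟨⟨b, a, key, h⟩, rfl⟩⟩

lemma loc_isUnit_of_mul_left {a b : S} (h : IsUnit (a * b)) : IsUnit a := by
  obtain ⟨u, hu⟩ := h
  have h1 : a * (b * ↑u⁻¹) = 1 := by rw [← mul_assoc, ← hu, Units.mul_inv]
  exact (loc_units_of_mul_eq_one h1).1

lemma loc_isUnit_of_mul_right {a b : S} (h : IsUnit (a * b)) : IsUnit b := by
  obtain ⟨u, hu⟩ := h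
  have h1 : ((↑u⁻¹ : S) * a) * b = 1 := by rw [mul_assoc, ← hu, Units.inv_mul]
  exact (loc_units_of_mul_eq_one h1).2

lemma loc_nonunit_add {a b : S} (ha : ¬ IsUnit a) (hb : ¬ IsUnit b) : ¬ IsUnit (a + b) := by
  intro h
  obtain ⟨u, hu⟩ := h
  have h1 : (↑u⁻¹ : S) * a + (↑u⁻¹ : S) * b = 1 := by
    rw [← mul_add, ← hu, Units.inv_mul]
  rcases IsLocalRing.isUnit_or_isUnit_of_add_one h1 with h2 | h2
  · exact ha (loc_isUnit_of_mul_right h2)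
  · exact hb (loc_isUnit_of_mul_right h2)


lemma loc_one_add_nonunit {e : S} (he : ¬ IsUnit e) : IsUnit (1 + e) := by
  rcases IsLocalRing.isUnit_or_isUnit_of_add_one (a := 1 + e) (b := -e) (by abel) with h | h
  · exact h
  · exact absurd ((IsUnit.neg_iff _).mp h) he

lemma loc_nonunit_sum {ι : Type*} (s : Finset ι) (f : ι → S)
    (h : ∀ i ∈ s, ¬ IsUnit (f i)) : ¬ IsUnit (∑ i ∈ s, f i) := by
  classical
  induction s using Finset.induction_on with
  | empty => simp only [Finset.sum_empty]; exact not_isUnit_zero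
  | @insert a s' hx ih =>
      rw [Finset.sum_insert hx]
      exact loc_nonunit_add (h a (Finset.mem_insert_self a s'))
        (ih fun i hi => h i (Finset.mem_insert_of_mem hi))

lemma loc_exists_unit_of_sum {ι : Type*} [Fintype ι] (f : ι → S)
    (h : IsUnit (∑ i, f i)) : ∃ i, IsUnit (f i) := by
  by_contra hc
  push_neg at hc
  exact loc_nonunit_sum Finset.univ f (fun i _ => hc i) h

end LocalRing

section MatrixToolkit
variable {S : Type*} [Ring S]

/-- every matrix on the empty index type is a unit -/
lemma isUnit_matrix_finzero (M : Matrix (Fin 0) (Fin 0) S) : IsUnit M :=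
  ⟨⟨M, M, by ext i j; exact i.elim0, by ext i j; exact i.elim0⟩, rfl⟩

lemma one_succ_succ {n : ℕ} (i j : Fin n) :
    (1 : Matrix (Fin (n+1)) (Fin (n+1)) S) i.succ j.succ
      = (1 : Matrix (Fin n) (Fin n) S) i j := by
  by_cases h : i = j
  · subst h; simp [Matrix.one_apply]
  · rw [Matrix.one_apply_ne (fun hc => h (Fin.succ_injective _ hc)), Matrix.one_apply_ne h]

lemma isUnit_submatrix_equiv {l n : Type*} [Fintype n] [DecidableEq n] [Fintype l]
    [DecidableEq l] {M : Matrix n n S} (e₁ e₂ : l ≃ n) (h : IsUnit M) :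
    IsUnit (M.submatrix e₁ e₂) := by
  obtain ⟨u, hu⟩ := h
  refine ⟨⟨M.submatrix e₁ e₂, (Units.val u⁻¹).submatrix e₂ e₁, ?_, ?_⟩, rfl⟩
  · rw [Matrix.submatrix_mul_equiv, ← hu, Units.mul_inv, Matrix.submatrix_one_equiv]
  · rw [Matrix.submatrix_mul_equiv, ← hu, Units.inv_mul, Matrix.submatrix_one_equiv]

/-- Bordered matrix with unit lower-right block is a unit. -/
lemma borderUnit {n : ℕ} {G : Matrix (Fin (n+1)) (Fin (n+1)) S}
    (h00 : G 0 0 = 1) (h0j : ∀ j : Fin n, G 0 j.succ = 0)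
    (hi0 : ∀ i : Fin n, G i.succ 0 = 0)
    (hsub : IsUnit (G.submatrix Fin.succ Fin.succ)) : IsUnit G := by
  obtain ⟨u, hu⟩ := hsub
  set V : Matrix (Fin n) (Fin n) S := (Units.val u⁻¹) with hV
  have hV1 : (G.submatrix Fin.succ Fin.succ) * V = 1 := by rw [hV, ← hu, Units.mul_inv]
  have hV2 : V * (G.submatrix Fin.succ Fin.succ) = 1 := by rw [hV, ← hu, Units.inv_mul]
  set H : Matrix (Fin (n+1)) (Fin (n+1)) S :=
    Matrix.of (Fin.cons (Fin.cons 1 (fun _ => 0)) (fun i' => Fin.cons 0 (V i'))) with hH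
  have hH00 : H 0 0 = 1 := by simp [hH]
  have hH0j : ∀ j : Fin n, H 0 j.succ = 0 := by intro j; simp [hH]
  have hHi0 : ∀ i : Fin n, H i.succ 0 = 0 := by intro i; simp [hH]
  have hHij : ∀ i j : Fin n, H i.succ j.succ = V i j := by intro i j; simp [hH]
  refine ⟨⟨G, H, ?_, ?_⟩, rfl⟩
  · ext i j
    rw [Matrix.mul_apply, Fin.sum_univ_succ]
    refine Fin.cases ?_ (fun i' => ?_) i <;> refine Fin.cases ?_ (fun j' => ?_) j
    · rw [h00, hH00, Matrix.one_apply_eq]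
      simp [hH0j, fun k : Fin n => h0j k]
    · rw [Matrix.one_apply_ne (Fin.succ_ne_zero j').symm, h00, hH0j, mul_zero]
      simp [fun k : Fin n => h0j k]
    · rw [Matrix.one_apply_ne (Fin.succ_ne_zero i'), hH00, hi0, zero_mul]
      simp [fun k : Fin n => hHi0 k]
    · rw [one_succ_succ, hi0, hH0j, zero_mul, zero_add]
      rw [← hV1, Matrix.mul_apply]
      exact Finset.sum_congr rfl fun k _ => by
        rw [Matrix.submatrix_apply, hHij]
  · ext i j
    rw [Matrix.mul_apply, Fin.sum_univ_succ]
    refine Fin.cases ?_ (fun i' => ?_) i <;> refine Fin.cases ?_ (fun j' => ?_) j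
    · rw [h00, hH00, Matrix.one_apply_eq]
      simp [fun k : Fin n => hH0j k]
    · rw [Matrix.one_apply_ne (Fin.succ_ne_zero j').symm, hH00, h0j, one_mul]
      simp [fun k : Fin n => hH0j k]
    · rw [Matrix.one_apply_ne (Fin.succ_ne_zero i'), hHi0, h00, zero_mul]
      simp [fun k : Fin n => hi0 k]
    · rw [one_succ_succ, hHi0, h0j, zero_mul, zero_add]
      rw [← hV2, Matrix.mul_apply]
      exact Finset.sum_congr rfl fun k _ => by
        rw [Matrix.submatrix_apply, hHij]

lemma sub_mul_sub_eq_one {n : ℕ} {G H : Matrix (Fin (n+1)) (Fin (n+1)) S}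
    (hi0 : ∀ i : Fin n, G i.succ 0 = 0) (hGH : G * H = 1) :
    (G.submatrix Fin.succ Fin.succ) * (H.submatrix Fin.succ Fin.succ) = 1 := by
  ext i j
  rw [Matrix.mul_apply]
  have h1 : (G * H) i.succ j.succ = (1 : Matrix (Fin (n+1)) (Fin (n+1)) S) i.succ j.succ := by
    rw [hGH]
  rw [Matrix.mul_apply, Fin.sum_univ_succ, hi0, zero_mul, zero_add] at h1
  rw [one_succ_succ] at h1
  rw [← h1]
  exact Finset.sum_congr rfl fun k _ => by rw [Matrix.submatrix_apply, Matrix.submatrix_apply]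

end MatrixToolkit

section Elim
variable {S : Type*} [Ring S]

lemma elim_pivot {n : ℕ} (c : Matrix (Fin (n+1)) (Fin (n+1)) S)
    (h : IsUnit (c 0 0)) :
    ∃ (e e' f f' : Matrix (Fin (n+1)) (Fin (n+1)) S) (v : S),
      c 0 0 * v = 1 ∧ v * c 0 0 = 1 ∧
      e * e' = 1 ∧ e' * e = 1 ∧ f * f' = 1 ∧ f' * f = 1 ∧
      (e * c * f) 0 0 = 1 ∧ (∀ j : Fin n, (e * c * f) 0 j.succ = 0) ∧
      (∀ i : Fin n, (e * c * f) i.succ 0 = 0) ∧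
      (∀ i j : Fin n, (e * c * f) i.succ j.succ
        = c i.succ j.succ - c i.succ 0 * (v * c 0 j.succ)) := by
  classical
  obtain ⟨w, hw⟩ := h
  set v : S := (↑w⁻¹ : S) with hv
  have hv1 : c 0 0 * v = 1 := by rw [hv, ← hw, Units.mul_inv]
  have hv2 : v * c 0 0 = 1 := by rw [hv, ← hw, Units.inv_mul]
  set X : Matrix (Fin (n+1)) (Fin (n+1)) S :=
    Matrix.of (fun i j => if j = 0 ∧ i ≠ 0 then -(c i 0) else 0) with hX
  set Y : Matrix (Fin (n+1)) (Fin (n+1)) S :=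
    Matrix.of (fun i j => if i = 0 ∧ j ≠ 0 then -(v * c 0 j) else 0) with hY
  set D : Matrix (Fin (n+1)) (Fin (n+1)) S :=
    Matrix.diagonal (fun i => if i = 0 then v else 1) with hD
  set D' : Matrix (Fin (n+1)) (Fin (n+1)) S :=
    Matrix.diagonal (fun i => if i = 0 then c 0 0 else 1) with hD'
  have hX0 : ∀ j : Fin (n+1), X 0 j = 0 := by intro j; simp [hX]
  have hXs0 : ∀ i : Fin n, X i.succ 0 = -(c i.succ 0) := by
    intro i; simp [hX, Fin.succ_ne_zero]
  have hXcol : ∀ (i j : Fin (n+1)), j ≠ 0 → X i j = 0 := by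
    intro i j hj; simp [hX, hj]
  have hY0 : ∀ i : Fin (n+1), Y i 0 = 0 := by intro i; simp [hY]
  have hYrow : ∀ (i j : Fin (n+1)), i ≠ 0 → Y i j = 0 := by
    intro i j hi; simp [hY, hi]
  have hY0s : ∀ j : Fin n, Y 0 j.succ = -(v * c 0 j.succ) := by
    intro j; simp [hY, Fin.succ_ne_zero]
  have hXmul : ∀ (M : Matrix (Fin (n+1)) (Fin (n+1)) S) i j,
      (X * M) i j = X i 0 * M 0 j := by
    intro M i j
    rw [Matrix.mul_apply]
    exact Finset.sum_eq_single 0 (fun k _ hk => by rw [hXcol i k hk, zero_mul])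
      (fun hk => absurd (Finset.mem_univ 0) hk)
  have hmulY : ∀ (M : Matrix (Fin (n+1)) (Fin (n+1)) S) i j,
      (M * Y) i j = M i 0 * Y 0 j := by
    intro M i j
    rw [Matrix.mul_apply]
    exact Finset.sum_eq_single 0 (fun k _ hk => by rw [hYrow k j hk, mul_zero])
      (fun hk => absurd (Finset.mem_univ 0) hk)
  have hX2 : X * X = 0 := by
    ext i j; rw [hXmul, hX0, mul_zero, Matrix.zero_apply]
  have hY2 : Y * Y = 0 := by
    ext i j; rw [hmulY, hY0, zero_mul, Matrix.zero_apply]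
  have hXpm : (1 + X) * (1 - X) = 1 := by
    have e1 : (1 + X) * (1 - X) = 1 - X * X := by noncomm_ring
    rw [e1, hX2, sub_zero]
  have hXmp : (1 - X) * (1 + X) = 1 := by
    have e1 : (1 - X) * (1 + X) = 1 - X * X := by noncomm_ring
    rw [e1, hX2, sub_zero]
  have hYpm : (1 + Y) * (1 - Y) = 1 := by
    have e1 : (1 + Y) * (1 - Y) = 1 - Y * Y := by noncomm_ring
    rw [e1, hY2, sub_zero]
  have hYmp : (1 - Y) * (1 + Y) = 1 := by
    have e1 : (1 - Y) * (1 + Y) = 1 - Y * Y := by noncomm_ring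
    rw [e1, hY2, sub_zero]
  have hDD' : D * D' = 1 := by
    rw [hD, hD', Matrix.diagonal_mul_diagonal]
    have e1 : (fun i : Fin (n+1) => (if i = 0 then v else 1) * (if i = 0 then c 0 0 else 1))
        = fun _ => (1 : S) := by
      funext i
      split_ifs with hi
      · exact hv2
      · rw [one_mul]
    rw [e1, Matrix.diagonal_one]
  have hD'D : D' * D = 1 := by
    rw [hD, hD', Matrix.diagonal_mul_diagonal]
    have e1 : (fun i : Fin (n+1) => (if i = 0 then c 0 0 else 1) * (if i = 0 then v else 1))
        = fun _ => (1 : S) := by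
      funext i
      split_ifs with hi
      · exact hv1
      · rw [one_mul]
    rw [e1, Matrix.diagonal_one]
  refine ⟨(1 + X) * D, D' * (1 - X), 1 + Y, 1 - Y, v, hv1, hv2, ?_, ?_, hYpm, hYmp, ?_⟩
  · calc (1 + X) * D * (D' * (1 - X)) = (1 + X) * ((D * D') * (1 - X)) := by
          rw [mul_assoc, mul_assoc]
      _ = (1 + X) * (1 - X) := by rw [hDD', one_mul]
      _ = 1 := hXpm
  · calc D' * (1 - X) * ((1 + X) * D) = D' * (((1 - X) * (1 + X)) * D) := by
          rw [mul_assoc, ← mul_assoc (1 - X)]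
      _ = D' * D := by rw [hXmp, one_mul]
      _ = 1 := hD'D
  -- entry computations
  have hec : ∀ i j, ((1 + X) * D * c) i j
      = (if i = 0 then v else 1) * c i j + X i 0 * (v * c 0 j) := by
    intro i j
    rw [mul_assoc, add_mul, one_mul, Matrix.add_apply, hXmul]
    rw [Matrix.diagonal_mul, Matrix.diagonal_mul]
    simp
  have hec0 : ∀ j, ((1 + X) * D * c) 0 j = v * c 0 j := by
    intro j
    rw [hec, if_pos rfl, hX0, zero_mul, add_zero]
  have hecs : ∀ (i : Fin n) (j : Fin (n+1)), ((1 + X) * D * c) i.succ j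
      = c i.succ j + -(c i.succ 0) * (v * c 0 j) := by
    intro i j
    rw [hec, if_neg (Fin.succ_ne_zero i), one_mul, hXs0]
  have hecs0 : ∀ i : Fin n, ((1 + X) * D * c) i.succ 0 = 0 := by
    intro i
    rw [hecs, hv2, mul_one, add_neg_cancel]
  have hGf : ∀ i j, ((1 + X) * D * c * (1 + Y)) i j
      = ((1 + X) * D * c) i j + ((1 + X) * D * c) i 0 * Y 0 j := by
    intro i j
    rw [mul_add, mul_one, Matrix.add_apply, hmulY]
  refine ⟨?_, ?_, ?_, ?_⟩
  · rw [hGf, hY0, mul_zero, add_zero, hec0, hv2]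
  · intro j
    rw [hGf, hY0s, hec0, hec0, hv2, one_mul, add_neg_cancel]
  · intro i
    rw [hGf, hY0, mul_zero, add_zero, hecs0]
  · intro i j
    rw [hGf, hecs0, zero_mul, add_zero, hecs, neg_mul, ← sub_eq_add_neg]

end Elim

section T12
variable {S : Type*} [Ring S] [IsLocalRing S]

/-- T1: one plus a matrix of nonunits is invertible over a local ring. -/
lemma isUnit_one_add_nonunits :
    ∀ (n : ℕ) (E : Matrix (Fin n) (Fin n) S), (∀ i j, ¬ IsUnit (E i j)) → IsUnit (1 + E) := by
  intro n
  induction n with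
  | zero => intro E _; exact isUnit_matrix_finzero _
  | succ n ih =>
    intro E hE
    have hc00 : (1 + E) 0 0 = 1 + E 0 0 := by rw [Matrix.add_apply, Matrix.one_apply_eq]
    have hcu : IsUnit ((1 + E) 0 0) := by rw [hc00]; exact loc_one_add_nonunit (hE 0 0)
    obtain ⟨e, e', f, f', v, hv1, hv2, hee', he'e, hff', hf'f, hG00, hG0j, hGi0, hGss⟩ :=
      elim_pivot (1 + E) hcu
    have hcs0 : ∀ i : Fin n, (1 + E) i.succ 0 = E i.succ 0 := by
      intro i
      rw [Matrix.add_apply, Matrix.one_apply_ne (Fin.succ_ne_zero i), zero_add]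
    set E₂ : Matrix (Fin n) (Fin n) S :=
      Matrix.of (fun i j => E i.succ j.succ
        - (1 + E) i.succ 0 * (v * (1 + E) 0 j.succ)) with hE₂
    have hsub : (e * (1 + E) * f).submatrix Fin.succ Fin.succ = 1 + E₂ := by
      ext i j
      simp only [Matrix.submatrix_apply, hGss, hE₂, Matrix.add_apply, Matrix.of_apply,
        one_succ_succ]
      abel
    have hE₂n : ∀ i j, ¬ IsUnit (E₂ i j) := by
      intro i j
      have heq : E₂ i j = E i.succ j.succ
          + -((1 + E) i.succ 0 * (v * (1 + E) 0 j.succ)) := by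
        rw [hE₂]
        simp only [Matrix.of_apply]
        exact sub_eq_add_neg _ _
      rw [heq]
      refine loc_nonunit_add (hE _ _) ?_
      intro hU
      have hU2 := (IsUnit.neg_iff _).mp hU
      have := loc_isUnit_of_mul_left hU2
      rw [hcs0] at this
      exact hE i.succ 0 this
    have hGsub : IsUnit ((e * (1 + E) * f).submatrix Fin.succ Fin.succ) := by
      rw [hsub]; exact ih E₂ hE₂n
    have hG : IsUnit (e * (1 + E) * f) := borderUnit hG00 hG0j hGi0 hGsub
    have hback : e' * (e * (1 + E) * f) * f' = 1 + E := by
      rw [mul_assoc e (1 + E) f, ← mul_assoc e' e, he'e, one_mul,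
        mul_assoc (1 + E) f f', hff', mul_one]
    have hue : IsUnit e' := ⟨⟨e', e, he'e, hee'⟩, rfl⟩
    have huf : IsUnit f' := ⟨⟨f', f, hf'f, hff'⟩, rfl⟩
    exact hback ▸ ((hue.mul hG).mul huf)

/-- T2: a square matrix over a local ring with a right inverse is a unit. -/
lemma isUnit_of_mul_eq_one_matrix :
    ∀ (n : ℕ) (M N : Matrix (Fin n) (Fin n) S), M * N = 1 → IsUnit M := by
  intro n
  induction n with
  | zero => intro M N _; exact isUnit_matrix_finzero _
  | succ n ih =>
    intro M N h
    have hsum : IsUnit (∑ k, M 0 k * N k 0) := by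
      rw [← Matrix.mul_apply, h, Matrix.one_apply_eq]; exact isUnit_one
    obtain ⟨k, hk⟩ := loc_exists_unit_of_sum _ hsum
    have hM0k : IsUnit (M 0 k) := loc_isUnit_of_mul_left hk
    set τ := Equiv.swap (0 : Fin (n+1)) k with hτ
    set M₁ := M.submatrix (Equiv.refl (Fin (n+1))) τ with hM₁
    set N₁ := N.submatrix τ (Equiv.refl (Fin (n+1))) with hN₁
    have hMN₁ : M₁ * N₁ = 1 := by
      rw [hM₁, hN₁, Matrix.submatrix_mul_equiv, h, Equiv.coe_refl, Matrix.submatrix_id_id]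
    have h₁00 : IsUnit (M₁ 0 0) := by
      rw [hM₁, Matrix.submatrix_apply, Equiv.refl_apply, hτ, Equiv.swap_apply_left]
      exact hM0k
    obtain ⟨e, e', f, f', v, _, _, hee', he'e, hff', hf'f, hG00, hG0j, hGi0, _⟩ :=
      elim_pivot M₁ h₁00
    have hGH : (e * M₁ * f) * (f' * (N₁ * e')) = 1 := by
      rw [mul_assoc (e * M₁) f, ← mul_assoc f f', hff', one_mul,
        mul_assoc e M₁, ← mul_assoc M₁ N₁, hMN₁, one_mul, hee']
    have hGsub := sub_mul_sub_eq_one hGi0 hGH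
    have hG : IsUnit (e * M₁ * f) := borderUnit hG00 hG0j hGi0 (ih _ _ hGsub)
    have hback : e' * (e * M₁ * f) * f' = M₁ := by
      rw [mul_assoc e M₁ f, ← mul_assoc e' e, he'e, one_mul,
        mul_assoc M₁ f f', hff', mul_one]
    have hue : IsUnit e' := ⟨⟨e', e, he'e, hee'⟩, rfl⟩
    have huf : IsUnit f' := ⟨⟨f', f, hf'f, hff'⟩, rfl⟩
    have hM₁u : IsUnit M₁ := hback ▸ ((hue.mul hG).mul huf)
    have hMu : IsUnit (M₁.submatrix (Equiv.refl (Fin (n+1))) τ.symm) :=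
      isUnit_submatrix_equiv _ _ hM₁u
    have hMeq : M₁.submatrix (Equiv.refl (Fin (n+1))) τ.symm = M := by
      rw [hM₁, Matrix.submatrix_submatrix]
      rw [show (⇑τ ∘ ⇑τ.symm) = id from funext fun x => τ.apply_symm_apply x]
      rw [show (⇑(Equiv.refl (Fin (n+1))) ∘ ⇑(Equiv.refl (Fin (n+1)))) = id from rfl]
      exact Matrix.submatrix_id_id M
    exact hMeq ▸ hMu

end T12

section Key
variable {S : Type*} [Ring S] [StarRing S] [IsLocalRing S]

lemma mul_cancel_left_of {M : Type*} [Monoid M] {a b : M} (h : a * b = 1) (z : M) :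
    a * (b * z) = z := by rw [← mul_assoc, h, one_mul]

/-- KEY lemma: hermitian completion to a unit. -/
lemma key_lemma :
    ∀ (n : ℕ) (c d p q : Matrix (Fin n) (Fin n) S),
      c * star d = d * star c → c * p + d * q = 1 →
      ∃ r : Matrix (Fin n) (Fin n) S, star r = r ∧ IsUnit (c * r + d) := by
  intro n
  induction n with
  | zero =>
    intro c d p q _ _
    exact ⟨0, star_zero _, isUnit_matrix_finzero _⟩
  | succ n ih =>
    intro c d p q hherm hun
    by_cases hex : ∃ i j, IsUnit (c i j)
    · -- pivot case
      obtain ⟨i₀, j₀, hij⟩ := hex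
      set σ := Equiv.swap (0 : Fin (n+1)) i₀ with hσ
      set τ := Equiv.swap (0 : Fin (n+1)) j₀ with hτ
      set c₁ := c.submatrix ⇑σ ⇑τ with hc₁
      set d₁ := d.submatrix ⇑σ ⇑τ with hd₁
      set p₁ := p.submatrix ⇑τ ⇑σ with hp₁
      set q₁ := q.submatrix ⇑τ ⇑σ with hq₁
      have hstar_c₁ : star c₁ = (star c).submatrix ⇑τ ⇑σ := by
        rw [hc₁, Matrix.star_eq_conjTranspose, Matrix.conjTranspose_submatrix,
          ← Matrix.star_eq_conjTranspose]
      have hstar_d₁ : star d₁ = (star d).submatrix ⇑τ ⇑σ := by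
        rw [hd₁, Matrix.star_eq_conjTranspose, Matrix.conjTranspose_submatrix,
          ← Matrix.star_eq_conjTranspose]
      have hherm₁ : c₁ * star d₁ = d₁ * star c₁ := by
        rw [hstar_c₁, hstar_d₁, hc₁, hd₁, Matrix.submatrix_mul_equiv,
          Matrix.submatrix_mul_equiv, hherm]
      have hun₁ : c₁ * p₁ + d₁ * q₁ = 1 := by
        have hadd : (c * p).submatrix ⇑σ ⇑σ + (d * q).submatrix ⇑σ ⇑σ
            = (c * p + d * q).submatrix ⇑σ ⇑σ := by
          ext i j
          simp [Matrix.submatrix_apply, Matrix.add_apply]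
        rw [hc₁, hd₁, hp₁, hq₁, Matrix.submatrix_mul_equiv, Matrix.submatrix_mul_equiv,
          hadd, hun, Matrix.submatrix_one_equiv]
      have h₁00 : IsUnit (c₁ 0 0) := by
        rw [hc₁, Matrix.submatrix_apply, hσ, hτ, Equiv.swap_apply_left, Equiv.swap_apply_left]
        exact hij
      obtain ⟨e, e', f, f', v, hv1, hv2, hee', he'e, hff', hf'f, hG00, hG0j, hGi0, hGss⟩ :=
        elim_pivot c₁ h₁00
      set G := e * c₁ * f with hG
      set d₂ := e * (d₁ * star f') with hd₂
      have hstarf'f : star f' * star f = 1 := by rw [← star_mul, hff', star_one]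
      have hstarff' : star f * star f' = 1 := by rw [← star_mul, hf'f, star_one]
      have hsd₂ : star d₂ = f' * (star d₁ * star e) := by
        rw [hd₂, star_mul, star_mul, star_star, mul_assoc]
      have hsG : star G = star f * (star c₁ * star e) := by
        rw [hG, star_mul, star_mul]
      -- transferred hermitian condition
      have hhermG : G * star d₂ = d₂ * star G := by
        rw [hsd₂, hsG, hG, hd₂]
        simp only [mul_assoc]
        rw [mul_cancel_left_of hff', mul_cancel_left_of hstarf'f]
        rw [← mul_assoc c₁, ← mul_assoc d₁, hherm₁]
      -- transferred unimodularity
      set p₂ := f' * (p₁ * e') with hp₂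
      set q₂ := star f * (q₁ * e') with hq₂
      have hunG : G * p₂ + d₂ * q₂ = 1 := by
        rw [hG, hd₂, hp₂, hq₂]
        simp only [mul_assoc]
        rw [mul_cancel_left_of hff', mul_cancel_left_of hstarf'f]
        calc e * (c₁ * (p₁ * e')) + e * (d₁ * (q₁ * e'))
            = e * ((c₁ * p₁ + d₁ * q₁) * e') := by
              rw [add_mul, mul_add, mul_assoc, mul_assoc]
          _ = 1 := by rw [hun₁, one_mul, hee']
      -- entry helper
      have hmulE : ∀ (A B : Matrix (Fin (n+1)) (Fin (n+1)) S) (i j : Fin (n+1)),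
          (A * B) i j = A i 0 * B 0 j + ∑ k : Fin n, A i k.succ * B k.succ j := by
        intro A B i j
        rw [Matrix.mul_apply, Fin.sum_univ_succ]
      -- (i) d₂ 0 0 is hermitian
      have hd00 : star (d₂ 0 0) = d₂ 0 0 := by
        have h00 := Matrix.ext_iff.2 hhermG 0 0
        rw [hmulE, hmulE] at h00
        simp only [Matrix.star_apply, hG00, hG0j, star_one, star_zero, one_mul, mul_one,
          mul_zero, zero_mul, Finset.sum_const_zero, add_zero] at h00
        exact h00
      -- (ii) first column of d₂ determined by first row
      have hd21 : ∀ i : Fin n, d₂ i.succ 0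
          = ∑ k : Fin n, G i.succ k.succ * star (d₂ 0 k.succ) := by
        intro i
        have h0 := Matrix.ext_iff.2 hhermG i.succ 0
        rw [hmulE, hmulE] at h0
        simp only [Matrix.star_apply, hG00, hG0j, hGi0, star_one, star_zero, one_mul, mul_one,
          mul_zero, zero_mul, Finset.sum_const_zero, add_zero, zero_add] at h0
        exact h0.symm
      -- blocks
      set cs := G.submatrix Fin.succ Fin.succ with hcs
      set ds := d₂.submatrix Fin.succ Fin.succ with hds
      -- (iii) hermitian condition for the blocks
      have hhermsub : cs * star ds = ds * star cs := by
        ext i j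
        have h0 := Matrix.ext_iff.2 hhermG i.succ j.succ
        rw [hmulE, hmulE] at h0
        simp only [Matrix.star_apply, hGi0, star_zero, zero_mul, mul_zero, zero_add] at h0
        rw [Matrix.mul_apply, Matrix.mul_apply]
        simp only [Matrix.star_apply, Matrix.submatrix_apply]
        exact h0
      -- (iv) unimodularity for the blocks
      set P : Matrix (Fin n) (Fin n) S :=
        Matrix.of (fun k j => p₂ k.succ j.succ + star (d₂ 0 k.succ) * q₂ 0 j.succ) with hP
      set Q : Matrix (Fin n) (Fin n) S :=
        Matrix.of (fun k j => q₂ k.succ j.succ) with hQ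
      have hunsub : cs * P + ds * Q = 1 := by
        ext i j
        have h0 := Matrix.ext_iff.2 hunG i.succ j.succ
        rw [Matrix.add_apply, hmulE, hmulE] at h0
        rw [hGi0, zero_mul, zero_add, hd21] at h0
        rw [Finset.sum_mul] at h0
        rw [one_succ_succ] at h0
        rw [Matrix.add_apply, Matrix.mul_apply, Matrix.mul_apply, ← h0]
        simp only [hcs, hds, Matrix.submatrix_apply, hP, hQ, Matrix.of_apply, mul_add,
          Finset.sum_add_distrib, ← mul_assoc]
        rw [add_assoc]
      -- apply induction hypothesis
      obtain ⟨r₂, hr₂, hu₂⟩ := ih cs ds P Q hhermsub hunsub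
      -- assemble hermitian completion for the (n+1) case
      set r' : Matrix (Fin (n+1)) (Fin (n+1)) S :=
        Matrix.of (Fin.cons (Fin.cons (1 - d₂ 0 0) (fun j' => -(d₂ 0 j'.succ)))
          (fun i' => Fin.cons (-(star (d₂ 0 i'.succ))) (fun j' => r₂ i' j'))) with hr'
      have hr'00 : r' 0 0 = 1 - d₂ 0 0 := by simp [hr']
      have hr'0s : ∀ j : Fin n, r' 0 j.succ = -(d₂ 0 j.succ) := by intro j; simp [hr']
      have hr's0 : ∀ i : Fin n, r' i.succ 0 = -(star (d₂ 0 i.succ)) := by intro i; simp [hr']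
      have hr'ss : ∀ i j : Fin n, r' i.succ j.succ = r₂ i j := by intro i j; simp [hr']
      have hr'herm : star r' = r' := by
        ext i j
        rw [Matrix.star_apply]
        refine Fin.cases ?_ (fun i' => ?_) i <;> refine Fin.cases ?_ (fun j' => ?_) j
        · rw [hr'00, star_sub, star_one, hd00]
        · rw [hr's0, hr'0s, star_neg, star_star]
        · rw [hr'0s, hr's0, star_neg]
        · rw [hr'ss, hr'ss]
          calc star (r₂ j' i') = (star r₂) i' j' := by rw [Matrix.star_apply]
            _ = r₂ i' j' := by rw [hr₂]
      -- the completed matrix W is a unit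
      have hW00 : (G * r' + d₂) 0 0 = 1 := by
        rw [Matrix.add_apply, hmulE, hG00, one_mul, hr'00]
        simp only [hG0j, zero_mul, Finset.sum_const_zero, add_zero]
        abel
      have hW0s : ∀ j : Fin n, (G * r' + d₂) 0 j.succ = 0 := by
        intro j
        rw [Matrix.add_apply, hmulE, hG00, one_mul, hr'0s]
        simp only [hG0j, zero_mul, Finset.sum_const_zero, add_zero]
        abel
      have hWs0 : ∀ i : Fin n, (G * r' + d₂) i.succ 0 = 0 := by
        intro i
        rw [Matrix.add_apply, hmulE, hGi0, zero_mul, zero_add]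
        have : ∑ k : Fin n, G i.succ k.succ * r' k.succ 0
            = -(d₂ i.succ 0) := by
          rw [hd21]
          rw [← Finset.sum_neg_distrib]
          refine Finset.sum_congr rfl fun k _ => ?_
          rw [hr's0, mul_neg]
        rw [this, neg_add_cancel]
      have hWss : ∀ i j : Fin n, (G * r' + d₂) i.succ j.succ = (cs * r₂ + ds) i j := by
        intro i j
        rw [Matrix.add_apply, hmulE, hGi0, zero_mul, zero_add, Matrix.add_apply,
          Matrix.mul_apply]
        simp only [hcs, hds, Matrix.submatrix_apply, hr'ss]
      have hWsub : (G * r' + d₂).submatrix Fin.succ Fin.succ = cs * r₂ + ds := by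
        ext i j
        rw [Matrix.submatrix_apply, hWss]
      have hWu : IsUnit (G * r' + d₂) :=
        borderUnit hW00 hW0s hWs0 (by rw [hWsub]; exact hu₂)
      -- transfer back through the elimination
      set s : Matrix (Fin (n+1)) (Fin (n+1)) S := f * (r' * star f) with hs
      have hsherm : star s = s := by
        rw [hs, star_mul, star_mul, star_star, hr'herm, mul_assoc]
      have hue' : IsUnit e' := ⟨⟨e', e, he'e, hee'⟩, rfl⟩
      have hustarf : IsUnit (star f) := ⟨⟨star f, star f', hstarff', hstarf'f⟩, rfl⟩
      have hback : c₁ * s + d₁ = e' * ((G * r' + d₂) * star f) := by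
        rw [add_mul, mul_add, hG, hd₂, hs]
        simp only [mul_assoc]
        rw [mul_cancel_left_of he'e, mul_cancel_left_of he'e, hstarf'f, mul_one]
      have hc₁s : IsUnit (c₁ * s + d₁) := by
        rw [hback]
        exact hue'.mul (hWu.mul hustarf)
      -- transfer back through the index permutation
      refine ⟨s.submatrix ⇑τ.symm ⇑τ.symm, ?_, ?_⟩
      · rw [Matrix.star_eq_conjTranspose, Matrix.conjTranspose_submatrix,
          ← Matrix.star_eq_conjTranspose, hsherm]
      · have hrs : (s.submatrix ⇑τ.symm ⇑τ.symm).submatrix ⇑τ ⇑τ = s := by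
          rw [Matrix.submatrix_submatrix]
          rw [show (⇑τ.symm ∘ ⇑τ) = id from funext fun x => τ.symm_apply_apply x]
          exact Matrix.submatrix_id_id s
        have heq : (c * s.submatrix ⇑τ.symm ⇑τ.symm + d).submatrix ⇑σ ⇑τ
            = c₁ * s + d₁ := by
          have hadd2 : ∀ (A B : Matrix (Fin (n+1)) (Fin (n+1)) S),
              (A + B).submatrix ⇑σ ⇑τ = A.submatrix ⇑σ ⇑τ + B.submatrix ⇑σ ⇑τ := by
            intro A B; ext i j; simp [Matrix.submatrix_apply, Matrix.add_apply]
          have hms : (c * s.submatrix ⇑τ.symm ⇑τ.symm).submatrix ⇑σ ⇑τ = c₁ * s := by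
            rw [← Matrix.submatrix_mul_equiv c (s.submatrix ⇑τ.symm ⇑τ.symm) ⇑σ τ ⇑τ,
              hrs, ← hc₁]
          rw [hadd2, hms, ← hd₁]
        have h1 : IsUnit ((c * s.submatrix ⇑τ.symm ⇑τ.symm + d).submatrix ⇑σ ⇑τ) := by
          rw [heq]; exact hc₁s
        have h2 := isUnit_submatrix_equiv σ.symm τ.symm h1
        rw [Matrix.submatrix_submatrix] at h2
        rw [show (⇑σ ∘ ⇑σ.symm) = id from funext fun x => σ.apply_symm_apply x] at h2
        rw [show (⇑τ ∘ ⇑τ.symm) = id from funext fun x => τ.apply_symm_apply x] at h2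
        rw [Matrix.submatrix_id_id] at h2
        exact h2
    · -- no unit entry in c
      refine ⟨0, star_zero _, ?_⟩
      rw [mul_zero, zero_add]
      push_neg at hex
      have hE : ∀ i j, ¬ IsUnit ((-(c * p)) i j) := by
        intro i j hU
        rw [Matrix.neg_apply] at hU
        have hU2 := (IsUnit.neg_iff _).mp hU
        rw [Matrix.mul_apply] at hU2
        obtain ⟨k, hk⟩ := loc_exists_unit_of_sum _ hU2
        exact hex i k (loc_isUnit_of_mul_left hk)
      have hdq : d * q = 1 + (-(c * p)) := by
        rw [← sub_eq_add_neg]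
        exact eq_sub_of_add_eq' hun
      have hu : IsUnit (d * q) := hdq ▸ isUnit_one_add_nonunits _ _ hE
      obtain ⟨u, huu⟩ := hu
      have hdone : d * (q * (Units.val u⁻¹)) = 1 := by
        rw [← mul_assoc, ← huu, Units.mul_inv]
      exact isUnit_of_mul_eq_one_matrix _ _ _ hdone

end Key

section TwoByTwo
variable {A : Type*} [Ring A] [StarRing A]

lemma rel_left {a b c d : A}
    (h : star (!![a, b; c, d]) * wElt * !![a, b; c, d] = wElt) :
    star a * c = star c * a ∧ star a * d - star c * b = 1 := by
  have h00 := Matrix.ext_iff.2 h 0 0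
  have h01 := Matrix.ext_iff.2 h 0 1
  simp only [wElt, Matrix.mul_apply, Fin.sum_univ_two, Matrix.star_apply] at h00 h01
  simp at h00 h01
  constructor
  · rwa [neg_add_eq_sub, sub_eq_zero] at h00
  · rwa [neg_add_eq_sub] at h01

lemma rel_right {a b c d : A}
    (h : !![a, b; c, d] * wElt * star (!![a, b; c, d]) = wElt) :
    c * star d = d * star c ∧ d * star a - c * star b = 1 := by
  have h11 := Matrix.ext_iff.2 h 1 1
  have h10 := Matrix.ext_iff.2 h 1 0
  simp only [wElt, Matrix.mul_apply, Fin.sum_univ_two, Matrix.star_apply] at h10 h11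
  simp at h10 h11
  constructor
  · rwa [neg_add_eq_sub, sub_eq_zero] at h11
  · have := congrArg Neg.neg h10
    rwa [neg_add, neg_neg, neg_neg, ← sub_eq_add_neg] at this


lemma wJJ : (wElt : Matrix (Fin 2) (Fin 2) A) * wElt = -1 := by
  ext i j
  fin_cases i <;> fin_cases j <;>
    simp [wElt, Matrix.mul_apply, Fin.sum_univ_two, Matrix.one_apply]

lemma isUnit_wElt : IsUnit (wElt : Matrix (Fin 2) (Fin 2) A) := by
  refine ⟨⟨wElt, -wElt, ?_, ?_⟩, rfl⟩
  · rw [mul_neg, wJJ, neg_neg]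
  · rw [neg_mul, wJJ, neg_neg]

lemma isUnit_uElt (r : A) : IsUnit (uElt r) := by
  refine ⟨⟨uElt r, uElt (-r), ?_, ?_⟩, rfl⟩ <;>
    · ext i j
      fin_cases i <;> fin_cases j <;>
        simp [uElt, Matrix.mul_apply, Fin.sum_univ_two, Matrix.one_apply]

/-- flip: from `y* J y = J` and `y` a unit, conclude `y J y* = J`. -/
lemma flip_rel {y : Matrix (Fin 2) (Fin 2) A} (hy : IsUnit y)
    (h : star y * wElt * y = wElt) : y * wElt * star y = wElt := by
  obtain ⟨u, hu⟩ := hy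
  have hyu : y * (Units.val u⁻¹) = 1 := by rw [← hu]; exact Units.mul_inv u
  have h1 : star y * wElt = wElt * (Units.val u⁻¹) := by
    have h2 : star y * wElt * y * (Units.val u⁻¹) = wElt * (Units.val u⁻¹) := by rw [h]
    rwa [mul_assoc (star y * wElt), hyu, mul_one] at h2
  have hJmJ : (wElt : Matrix (Fin 2) (Fin 2) A) * (-wElt) = 1 := by
    rw [mul_neg, wJJ, neg_neg]
  have hstar : star y = wElt * (Units.val u⁻¹) * (-wElt) := by
    have h3 : star y * (wElt * (-wElt)) = wElt * (Units.val u⁻¹) * (-wElt) := by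
      rw [← mul_assoc, h1]
    rwa [hJmJ, mul_one] at h3
  rw [hstar]
  calc y * wElt * (wElt * (Units.val u⁻¹) * (-wElt))
      = y * (wElt * wElt) * (Units.val u⁻¹) * (-wElt) := by
        simp only [mul_assoc]
    _ = y * (Units.val u⁻¹) * wElt := by
        rw [wJJ, mul_neg_one, neg_mul, neg_mul_neg]
    _ = wElt := by rw [hyu, one_mul]

end TwoByTwo

section Master
variable {A : Type*} [Ring A] [StarRing A]

lemma assoc3 {M : Type*} [Monoid M] {P Q R D : M} (h : P * (Q * R) = D) (Z : M) :
    P * (Q * (R * Z)) = D * Z := by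
  rw [← mul_assoc, ← mul_assoc, mul_assoc P Q R, h]

set_option maxHeartbeats 2000000 in
lemma bruhat_main
    (key : ∀ c d p q : A, c * star d = d * star c → c * p + d * q = 1 →
      ∃ r : A, star r = r ∧ IsUnit (c * r + d))
    (x : Matrix (Fin 2) (Fin 2) A) (hx : IsUnit x)
    (hJ : star x * wElt * x = wElt) :
    ∃ b₁ b₂ b₃, InBorel b₁ ∧ InBorel b₂ ∧ InBorel b₃ ∧
      x = b₁ * wElt * b₂ * wElt * b₃ := by
  set a := x 0 0 with ha
  set b := x 0 1 with hb
  set c := x 1 0 with hc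
  set d := x 1 1 with hd
  have hxe : x = !![a, b; c, d] := Matrix.eta_fin_two x
  have hflip := flip_rel hx hJ
  rw [hxe] at hflip
  obtain ⟨hS4, hS3⟩ := rel_right hflip
  have hun : c * (-(star b)) + d * (star a) = 1 := by
    rw [mul_neg, neg_add_eq_sub]
    exact hS3
  obtain ⟨r, hr, hcu⟩ := key c d (-(star b)) (star a) hS4 hun
  have hU : (hcu.unit : A) = c * r + d := hcu.unit_spec
  set a₁ : A := -(a * r + b) with ha₁
  set c₁ : A := -(c * r + d) with hc₁
  set ci : A := -(Units.val hcu.unit⁻¹) with hci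
  have hci1 : c₁ * ci = 1 := by
    rw [hc₁, hci, neg_mul_neg]
    exact hcu.mul_val_inv
  have hci2 : ci * c₁ = 1 := by
    rw [hc₁, hci, neg_mul_neg]
    exact hcu.val_inv_mul
  -- the matrix y = x * u_r * w and its relations
  have huJu : star (uElt r) * (wElt * uElt r) = (wElt : Matrix (Fin 2) (Fin 2) A) := by
    ext i j
    fin_cases i <;> fin_cases j <;>
      simp [uElt, wElt, Matrix.mul_apply, Fin.sum_univ_two, Matrix.star_apply, hr]
  have hwJw : star (wElt) * (wElt * wElt) = (wElt : Matrix (Fin 2) (Fin 2) A) := by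
    ext i j
    fin_cases i <;> fin_cases j <;>
      simp [wElt, Matrix.mul_apply, Fin.sum_univ_two, Matrix.star_apply]
  have hJ'' : star x * (wElt * x) = wElt := by rw [← mul_assoc]; exact hJ
  have hJy : star (x * uElt r * wElt) * wElt * (x * uElt r * wElt) = wElt := by
    simp only [star_mul, mul_assoc]
    rw [assoc3 hJ'' (uElt r * wElt), assoc3 huJu wElt]
    exact hwJw
  have hyu : IsUnit (x * uElt r * wElt) := (hx.mul (isUnit_uElt r)).mul isUnit_wElt
  have hflipy := flip_rel hyu hJy
  have hy : x * uElt r * wElt = !![a₁, a; c₁, c] := by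
    rw [hxe, ha₁, hc₁]
    ext i j
    fin_cases i <;> fin_cases j <;>
      simp [uElt, wElt, Matrix.mul_apply, Fin.sum_univ_two] <;> abel
  rw [hy] at hJy hflipy
  obtain ⟨E1, E2⟩ := rel_left hJy
  obtain ⟨E3, _⟩ := rel_right hflipy
  -- E1 : star a₁ * c₁ = star c₁ * a₁
  -- E2 : star a₁ * c - star c₁ * a = 1
  -- E3 : c₁ * star c = c * star c₁
  set r1 : A := a₁ * ci with hr1def
  set qq : A := ci * c with hqqdef
  have hr1 : star r1 = r1 := by
    rw [hr1def]
    calc star (a₁ * ci) = star ci * star a₁ := star_mul _ _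
      _ = star ci * star a₁ * (c₁ * ci) := by rw [hci1, mul_one]
      _ = star ci * (star a₁ * c₁) * ci := by simp only [mul_assoc]
      _ = star ci * (star c₁ * a₁) * ci := by rw [E1]
      _ = (star ci * star c₁) * (a₁ * ci) := by simp only [mul_assoc]
      _ = a₁ * ci := by rw [← star_mul, hci1, star_one, one_mul]
  have hqq : star qq = qq := by
    rw [hqqdef]
    calc star (ci * c) = star c * star ci := star_mul _ _
      _ = (ci * c₁) * (star c * star ci) := by rw [hci2, one_mul]
      _ = ci * (c₁ * star c) * star ci := by simp only [mul_assoc]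
      _ = ci * (c * star c₁) * star ci := by rw [E3]
      _ = (ci * c) * (star c₁ * star ci) := by simp only [mul_assoc]
      _ = ci * c := by rw [← star_mul, hci2, star_one, mul_one]
  have hr1' : r1 = star ci * star a₁ := by
    rw [← hr1, hr1def]; exact star_mul _ _
  have hE2' : star a₁ * c = 1 + star c₁ * a := by
    rw [eq_add_of_sub_eq E2]
  have hE00 : r1 * c - star ci = a := by
    calc r1 * c - star ci = star ci * (star a₁ * c) - star ci := by
          rw [hr1', mul_assoc]
      _ = star ci + (star ci * star c₁) * a - star ci := by
          rw [hE2', mul_add, mul_one, mul_assoc]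
      _ = a := by rw [← star_mul, hci1, star_one, one_mul]; abel
  have hr1c₁ : r1 * c₁ = a₁ := by rw [hr1def, mul_assoc, hci2, mul_one]
  have hI10 : c₁ * qq = c := by rw [hqqdef, ← mul_assoc, hci1, one_mul]
  -- hElt computations
  have hElt1 : hElt (1 : Aˣ) = (1 : Matrix (Fin 2) (Fin 2) A) := by
    ext i j
    fin_cases i <;> fin_cases j <;> simp [hElt, Matrix.one_apply]
  have hUneg : ((-hcu.unit : Aˣ) : A) = c₁ := by
    rw [Units.val_neg, hU, hc₁]
  have hUneginv : ((( -hcu.unit)⁻¹ : Aˣ) : A) = ci := by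
    have h1 : (((-hcu.unit)⁻¹ : Aˣ) : A) * ((-hcu.unit : Aˣ) : A) = 1 := Units.inv_mul _
    calc (((-hcu.unit)⁻¹ : Aˣ) : A)
        = (((-hcu.unit)⁻¹ : Aˣ) : A) * (((-hcu.unit : Aˣ) : A) * ci) := by
          rw [hUneg, hci1, mul_one]
      _ = ci := by rw [← mul_assoc, h1, one_mul]
  have hbt : hElt (-hcu.unit) = !![c₁, 0; 0, star ci] := by
    show !![((-hcu.unit : Aˣ) : A), 0; 0, ((((star (-hcu.unit))⁻¹ : Aˣ)) : A)]
        = !![c₁, 0; 0, star ci]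
    rw [hUneg, Units.coe_star_inv, hUneginv]
  have hb₂ : hElt (-hcu.unit) * uElt qq = !![c₁, c; 0, star ci] := by
    rw [hbt]
    ext i j
    fin_cases i <;> fin_cases j <;>
      simp [uElt, Matrix.mul_apply, Fin.sum_univ_two, hI10]
  have hstep1 : uElt r1 * wElt = !![-r1, (1 : A); -1, 0] := by
    ext i j
    fin_cases i <;> fin_cases j <;>
      simp [uElt, wElt, Matrix.mul_apply, Fin.sum_univ_two]
  have hstep2 : !![-r1, (1 : A); -1, 0] * !![c₁, c; 0, star ci]
      = !![-(r1 * c₁), -(r1 * c) + star ci; -c₁, -c] := by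
    ext i j
    fin_cases i <;> fin_cases j <;>
      simp [Matrix.mul_apply, Fin.sum_univ_two]
  have hstep3 : !![-(r1 * c₁), -(r1 * c) + star ci; -c₁, -c] * wElt
      = !![r1 * c - star ci, -(r1 * c₁); c, -c₁] := by
    ext i j
    fin_cases i <;> fin_cases j <;>
      (simp [wElt, Matrix.mul_apply, Fin.sum_univ_two]; try abel)
  have hstep4 : !![r1 * c - star ci, -(r1 * c₁); c, -c₁] * uElt (-r) = !![a, b; c, d] := by
    ext i j
    fin_cases i <;> fin_cases j
    · simpa [uElt, Matrix.mul_apply, Fin.sum_univ_two] using hE00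
    · simp [uElt, Matrix.mul_apply, Fin.sum_univ_two, hE00, hr1c₁, ha₁, mul_neg]
    · simp [uElt, Matrix.mul_apply, Fin.sum_univ_two]
    · simp [uElt, Matrix.mul_apply, Fin.sum_univ_two, hc₁, mul_neg]
  refine ⟨hElt 1 * uElt r1, hElt (-hcu.unit) * uElt qq, hElt 1 * uElt (-r),
    ⟨1, r1, hr1, rfl⟩, ⟨-hcu.unit, qq, hqq, rfl⟩,
    ⟨1, -r, by rw [star_neg, hr], rfl⟩, ?_⟩
  have hprod : hElt (1 : Aˣ) * uElt r1 * wElt * (hElt (-hcu.unit) * uElt qq) * wElt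
      * (hElt (1 : Aˣ) * uElt (-r)) = !![a, b; c, d] := by
    rw [hElt1, one_mul, one_mul, hb₂, hstep1, hstep2, hstep3, hstep4]
  rw [hxe, ← hprod]

end Master

/-- for a local ring `S` with involution in which `2` is a unit and
`A = M(m,S)`, the group `SL_*(2,A)` has a Bruhat decomposition of length `2`:
every element lies in `B ∪ BwB ∪ BwBwB`. -/
theorem stmt5 {S : Type*} [Ring S] [StarRing S] [IsLocalRing S]
    (h2 : IsUnit (2 : S)) (m : ℕ)
    (x : Matrix (Fin 2) (Fin 2) (Matrix (Fin m) (Fin m) S))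
    (hx : IsUnit x)
    (hJ : star x * (!![0, 1; -1, 0] : Matrix (Fin 2) (Fin 2) (Matrix (Fin m) (Fin m) S)) * x =
      !![0, 1; -1, 0]) :
    InBorel x ∨
    (∃ b₁ b₂, InBorel b₁ ∧ InBorel b₂ ∧ x = b₁ * wElt * b₂) ∨
    (∃ b₁ b₂ b₃, InBorel b₁ ∧ InBorel b₂ ∧ InBorel b₃ ∧
      x = b₁ * wElt * b₂ * wElt * b₃) := by
  refine Or.inr (Or.inr ?_)
  have hJ' : star x * (wElt : Matrix (Fin 2) (Fin 2) (Matrix (Fin m) (Fin m) S)) * x = wElt := hJ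
  exact bruhat_main (fun c d p q h1 h2 => key_lemma m c d p q h1 h2) x hx hJ'
end

section
/- Let S be a commutative local ring with involution and V a free S-module with nondegenerate skew hermitian form h admitting a symplectic basis u₁,v₁,…,u_m,v_m. For u ∈ V the following are equivalent: (1) u is a basis vector of V (belongs to some basis); (2) h(u,w) is a unit of S for some w in the given symplectic basis; (3) h(u,v) is a unit for some v ∈ V; (4) h(u,z) = 1 for some z ∈ V. -/
variable {S V : Type*} [CommRing S] [StarRing S] [AddCommGroup V] [Module S V]

/-- `b` is a symplectic basis for the skew hermitian form `h`. -/
def IsSympBasis {m : ℕ} (h : V →ₛₗ[starRingEnd S] V →ₗ[S] S)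
    (b : Module.Basis (Fin m ⊕ Fin m) S V) : Prop :=
  (∀ i j, h (b (.inl i)) (b (.inr j)) = if i = j then 1 else 0) ∧
  (∀ i j, h (b (.inl i)) (b (.inl j)) = 0) ∧
  (∀ i j, h (b (.inr i)) (b (.inr j)) = 0)

/-- `v` is a basis vector of the free module `V` of rank `2m`. -/
def IsBasisVector (S : Type*) {V : Type*} [CommRing S] [AddCommGroup V] [Module S V]
    (m : ℕ) (v : V) : Prop :=
  ∃ (c : Module.Basis (Fin m ⊕ Fin m) S V) (i : Fin m ⊕ Fin m), c i = v

/-!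
Over a local ring a sum is a unit only if one of its summands is. Expanding `f v` for a linear
form `f` in a basis `b` thus gives an index `k` where both the coordinate `b.repr v k` and `f (b k)`
are units; applied to a coordinate form of a basis containing `u`, or to `h u` itself, this yields
(1) → (2) and (4) → (2). Conversely a vector whose `k`-th coordinate is a unit may replace `b k`,
since `b.det` of the modified family is exactly that coordinate. For a symplectic basis,
`h u (b i)` is, up to sign and involution, the coordinate of `u` at the partner index `i.swap`.
-/

namespace Module.Basis

variable {ι R M : Type*} [CommRing R] [AddCommGroup M] [Module R M]

theorem det_update_self [Fintype ι] [DecidableEq ι] (b : Basis ι R M) (k : ι) (u : M) :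
    b.det (Function.update b k u) = b.repr u k := by
  rw [b.det_apply, b.toMatrix_update, b.toMatrix_self, ← Matrix.cramer_apply, Matrix.cramer_one]
  rfl

theorem exists_basis_apply_eq_of_isUnit_repr [Fintype ι] [DecidableEq ι] (b : Basis ι R M)
    {u : M} {k : ι} (hk : IsUnit (b.repr u k)) : ∃ c : Basis ι R M, c k = u := by
  obtain ⟨hli, hsp⟩ := b.is_basis_iff_det.mpr (by rwa [b.det_update_self])
  exact ⟨Basis.mk hli hsp.ge, by simp⟩

theorem exists_isUnit_repr_and_isUnit_apply [IsLocalRing R] (b : Basis ι R M)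
    (f : M →ₗ[R] R) {v : M} (hv : IsUnit (f v)) :
    ∃ k, IsUnit (b.repr v k) ∧ IsUnit (f (b k)) := by
  have hsum : f v = (b.repr v).sum fun k a => a * f (b k) := by
    conv_lhs => rw [← b.linearCombination_repr v]
    simp [Finsupp.linearCombination_apply, Finsupp.sum, map_sum]
  rw [hsum] at hv
  obtain ⟨k, -, hk⟩ := IsLocalRing.exists_of_isUnit_sum hv
  exact ⟨k, IsUnit.mul_iff.mp hk⟩

end Module.Basis

theorem LinearMap.apply_eq_sum_star_repr_mul {ι : Type*} [Fintype ι]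
    (h : V →ₛₗ[starRingEnd S] V →ₗ[S] S) (b : Module.Basis ι S V) (x y : V) :
    h x y = ∑ j, star (b.repr x j) * h (b j) y := by
  conv_lhs => rw [← b.sum_repr x]
  simp only [map_sum, LinearMap.map_smulₛₗ, LinearMap.sum_apply, LinearMap.smul_apply, smul_eq_mul,
    starRingEnd_apply]

namespace IsSympBasis

variable {m : ℕ} {h : V →ₛₗ[starRingEnd S] V →ₗ[S] S} {b : Module.Basis (Fin m ⊕ Fin m) S V}

theorem apply_inr (hb : IsSympBasis h b) (x : V) (t : Fin m) :
    h x (b (.inr t)) = star (b.repr x (.inl t)) := by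
  rw [h.apply_eq_sum_star_repr_mul b, Fintype.sum_sum_type]
  simp only [hb.1, hb.2.2, mul_ite, mul_one, mul_zero, Finset.sum_const_zero, add_zero,
    Finset.sum_ite_eq', Finset.mem_univ, if_true]

theorem apply_inl (hskew : ∀ x y, star (h x y) = -h y x) (hb : IsSympBasis h b) (x : V)
    (t : Fin m) : h x (b (.inl t)) = -star (b.repr x (.inr t)) := by
  have hswap : ∀ s, h (b (.inr s)) (b (.inl t)) = -if t = s then 1 else 0 := fun s => by
    rw [← neg_neg (h _ _), ← hskew, hb.1]; split_ifs <;> simp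
  rw [h.apply_eq_sum_star_repr_mul b, Fintype.sum_sum_type]
  simp only [hb.2.1, hswap, mul_neg, mul_ite, mul_one, mul_zero, Finset.sum_const_zero, zero_add,
    Finset.sum_neg_distrib, Finset.sum_ite_eq, Finset.mem_univ, if_true]

theorem isUnit_apply_iff (hskew : ∀ x y, star (h x y) = -h y x) (hb : IsSympBasis h b)
    (x : V) (i : Fin m ⊕ Fin m) : IsUnit (h x (b i)) ↔ IsUnit (b.repr x i.swap) := by
  cases i with
  | inl t => rw [hb.apply_inl hskew, IsUnit.neg_iff, isUnit_star]; rfl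
  | inr t => rw [hb.apply_inr, isUnit_star]; rfl

end IsSympBasis

theorem stmt11_general [IsLocalRing S] {m : ℕ}
    (h : V →ₛₗ[starRingEnd S] V →ₗ[S] S)
    (hskew : ∀ x y, star (h x y) = - h y x)
    (b : Module.Basis (Fin m ⊕ Fin m) S V) (hb : IsSympBasis h b) (u : V) :
    [IsBasisVector S m u,
     ∃ i : Fin m ⊕ Fin m, IsUnit (h u (b i)),
     ∃ v : V, IsUnit (h u v),
     ∃ z : V, h u z = 1].TFAE := by
  tfae_have 1 → 2 := by
    rintro ⟨c, i, rfl⟩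
    obtain ⟨k, hk, -⟩ := b.exists_isUnit_repr_and_isUnit_apply (c.coord i) (v := c i) (by simp)
    exact ⟨k.swap, by rwa [hb.isUnit_apply_iff hskew, Sum.swap_swap]⟩
  tfae_have 2 → 3 := fun ⟨i, hi⟩ => ⟨b i, hi⟩
  tfae_have 3 → 4 := by
    rintro ⟨v, s, hs⟩
    exact ⟨(↑s⁻¹ : S) • v, by rw [map_smul, smul_eq_mul, ← hs, Units.inv_mul]⟩
  tfae_have 4 → 2 := by
    rintro ⟨z, hz⟩
    obtain ⟨k, -, hk⟩ := b.exists_isUnit_repr_and_isUnit_apply (h u) (v := z) (by simp [hz])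
    exact ⟨k, hk⟩
  tfae_have 2 → 1 := by
    rintro ⟨i, hi⟩
    obtain ⟨c, hc⟩ := b.exists_basis_apply_eq_of_isUnit_repr ((hb.isUnit_apply_iff hskew u i).mp hi)
    exact ⟨c, i.swap, hc⟩
  tfae_finish

/-- characterizations of basis vectors of `V` in terms of the
nondegenerate skew hermitian form `h`. -/
theorem stmt11 [IsLocalRing S] {m : ℕ}
    (h : V →ₛₗ[starRingEnd S] V →ₗ[S] S)
    (hskew : ∀ x y, star (h x y) = - h y x)
    (hnd : ∀ x, (∀ y, h x y = 0) → x = 0)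
    (b : Module.Basis (Fin m ⊕ Fin m) S V) (hb : IsSympBasis h b) (u : V) :
    [IsBasisVector S m u,
     ∃ i : Fin m ⊕ Fin m, IsUnit (h u (b i)),
     ∃ v : V, IsUnit (h u v),
     ∃ z : V, h u z = 1].TFAE :=
  stmt11_general h hskew b hb u
end

section
/- Let S be a commutative local ring with involution * and fixed ring R, V free of rank 2m with nondegenerate skew hermitian form h and symplectic basis. Let u, v be basis vectors of V with h(u,u) = h(v,v) = 0 and h(u,v) ∈ R^× (a unit fixed by *). Then there is an element of the group T generated by the transvections f_{a,w} (a ∈ R, w a basis vector of length 0) mapping u to v; explicitly, f_{-h(u,v)⁻¹, v-u}(u) = v. -/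
variable {S V : Type*} [CommRing S] [StarRing S] [AddCommGroup V] [Module S V]

/-- The unitary transvection `f_{a,v} : u ↦ u + a h(v,u) v`. -/
def transvect (h : V →ₛₗ[starRingEnd S] V →ₗ[S] S) (a : S) (v : V) : Module.End S V :=
  LinearMap.id + LinearMap.smulRight (a • h v) v

/-- The set of invertible endomorphisms given by unitary transvections `f_{a,v}`
with `a ∈ R` and `v` a basis vector of length zero. -/
def transvSet (h : V →ₛₗ[starRingEnd S] V →ₗ[S] S) (m : ℕ) : Set (Module.End S V)ˣ :=
  {g | ∃ (a : S) (v : V), star a = a ∧ h v v = 0 ∧ IsBasisVector S m v ∧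
    (g : Module.End S V) = transvect h a v}

/-! Since `h(u,v)` is fixed by `*`, skew-hermitianity gives `h(v,u) = -h(u,v)`, so `w = v - u`
is isotropic and `h(w,u) = -h(u,v)` is a unit; hence `f_{-h(u,v)⁻¹, w}` sends `u` to `u + w = v`.
It lies in `T` because `w` is a basis vector: `h(·,u)` maps a combination of basis vectors with
non-unit coefficients into the maximal ideal of `S`, so some coordinate `w_k` is a unit, and
then `b_k` may be replaced by `w` in the basis. -/

theorem Module.Basis.exists_isUnit_repr_of_isUnit_apply {ι R T M : Type*} [Semiring R]
    [CommSemiring T] [IsLocalRing T] [AddCommMonoid M] [Module R M] {σ : R →+* T}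
    [IsLocalHom σ] (b : Module.Basis ι R M) (f : M →ₛₗ[σ] T) {w : M} (hw : IsUnit (f w)) :
    ∃ k, IsUnit (b.repr w k) := by
  by_contra! hcoord
  refine (IsLocalRing.mem_maximalIdeal _).mp ?_ hw
  rw [← b.linearCombination_repr w, Finsupp.linearCombination_apply, map_finsuppSum]
  refine Ideal.sum_mem _ fun k _ => ?_
  dsimp only
  rw [map_smulₛₗ f, smul_eq_mul]
  exact Ideal.mul_mem_right _ _ ((map_mem_nonunits_iff σ _).mpr (hcoord k))

theorem Module.Basis.exists_basis_apply_eq_of_isUnit_repr_s12 {ι R M : Type*} [Ring R]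
    [AddCommGroup M] [Module R M] (b : Module.Basis ι R M) {w : M} {k : ι}
    (hk : IsUnit (b.repr w k)) : ∃ c : Module.Basis ι R M, c k = w := by
  -- `x ↦ x + x_k (w - b_k)` is invertible because `1 + (w_k - 1) = w_k` is a unit.
  have hunit : IsUnit (1 + b.coord k (w - b k)) := by simpa using hk
  exact ⟨b.map (LinearEquiv.dilatransvection hunit), by
    simp [LinearEquiv.dilatransvection.apply]⟩

instance isLocalHom_starRingEnd {R : Type*} [CommSemiring R] [StarRing R] :
    IsLocalHom (starRingEnd R) :=
  ⟨fun _ => isUnit_star.mp⟩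

section transvect

variable (h : V →ₛₗ[starRingEnd S] V →ₗ[S] S) {w : V}

theorem transvect_apply (a : S) (x : V) : transvect h a w x = x + (a * h w x) • w := rfl

theorem transvect_eq_transvection (a : S) :
    transvect h a w = LinearMap.transvection (a • h w) w := rfl

theorem transvect_mul_transvect (hw : h w w = 0) (a c : S) :
    transvect h a w * transvect h c w = transvect h (a + c) w := by
  simp only [transvect_eq_transvection, add_smul]
  exact LinearMap.transvection.comp_of_right_eq (by simp [hw])

theorem transvect_zero : transvect h 0 w = 1 := by
  rw [transvect_eq_transvection, zero_smul, LinearMap.transvection.of_left_eq_zero]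
  rfl

theorem isUnit_transvect (hw : h w w = 0) (a : S) : IsUnit (transvect h a w) :=
  ⟨⟨transvect h a w, transvect h (-a) w,
    by rw [transvect_mul_transvect h hw, add_neg_cancel, transvect_zero],
    by rw [transvect_mul_transvect h hw, neg_add_cancel, transvect_zero]⟩, rfl⟩

theorem transvect_apply_of_mul_eq_one {a : S} {x : V} (hx : a * h w x = 1) :
    transvect h a w x = x + w := by
  rw [transvect_apply, hx, one_smul]

end transvect

theorem stmt12_general [IsLocalRing S] {m : ℕ}
    (h : V →ₛₗ[starRingEnd S] V →ₗ[S] S)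
    (hskew : ∀ x y, star (h x y) = - h y x)
    (b : Module.Basis (Fin m ⊕ Fin m) S V)
    (u v : V)
    (hu0 : h u u = 0) (hv0 : h v v = 0)
    (hfix : star (h u v) = h u v) (hunit : IsUnit (h u v)) :
    (∃ g ∈ Subgroup.closure (transvSet h m), (g : Module.End S V) u = v) ∧
      transvect h (-Ring.inverse (h u v)) (v - u) u = v := by
  have hvu : h v u = -h u v := by rw [← hfix, hskew, neg_neg]
  have hwu : h (v - u) u = -h u v := by simp [hvu, hu0]
  have hww : h (v - u) (v - u) = 0 := by simp [hvu, hu0, hv0]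
  have hmaps : transvect h (-Ring.inverse (h u v)) (v - u) u = v := by
    rw [transvect_apply_of_mul_eq_one h, add_sub_cancel]
    rw [hwu, neg_mul_neg, Ring.inverse_mul_cancel _ hunit]
  have hstar : star (-Ring.inverse (h u v)) = -Ring.inverse (h u v) := by
    rw [star_neg, ← Ring.inverse_star, hfix]
  obtain ⟨k, hk⟩ := b.exists_isUnit_repr_of_isUnit_apply (h.flip u) (w := v - u)
    (by simpa [hvu, hu0] using hunit)
  obtain ⟨c, hc⟩ := b.exists_basis_apply_eq_of_isUnit_repr_s12 hk
  exact ⟨⟨(isUnit_transvect h hww _).unit,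
    Subgroup.subset_closure ⟨_, _, hstar, hww, ⟨c, k, hc⟩, rfl⟩, hmaps⟩, hmaps⟩

/-- if `u, v` are basis vectors of length `0` with `h(u,v) ∈ R^×`, then
some element of the transvection group `T` maps `u` to `v`; explicitly
`f_{-h(u,v)⁻¹, v-u}(u) = v`. -/
theorem stmt12 [IsLocalRing S] {m : ℕ}
    (h : V →ₛₗ[starRingEnd S] V →ₗ[S] S)
    (hskew : ∀ x y, star (h x y) = - h y x)
    (hnd : ∀ x, (∀ y, h x y = 0) → x = 0)
    (b : Module.Basis (Fin m ⊕ Fin m) S V) (hb : IsSympBasis h b)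
    (u v : V) (hu : IsBasisVector S m u) (hv : IsBasisVector S m v)
    (hu0 : h u u = 0) (hv0 : h v v = 0)
    (hfix : star (h u v) = h u v) (hunit : IsUnit (h u v)) :
    (∃ g ∈ Subgroup.closure (transvSet h m), (g : Module.End S V) u = v) ∧
      transvect h (-Ring.inverse (h u v)) (v - u) u = v :=
  stmt12_general h hskew b u v hu0 hv0 hfix hunit
end

section
/- Let S be a commutative local ring with a nontrivial involution * and fixed ring R, and consider W = S² with the skew hermitian form h(u,v) = u* J v, J = (0 1; -1 0). Then, identifying unitary maps with their matrices, SU(W) = SL(2,R): a matrix X ∈ GL(2,S) preserves h and has determinant 1 if and only if all entries of X lie in R and det X = 1. -/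
set_option maxHeartbeats 1000000 in
/-- for a commutative local ring `S` with a nontrivial involution and
fixed ring `R`, and `W = S²` with the skew hermitian form `h(u,v) = u* J v`, one has
`SU(W) = SL(2,R)`: an invertible `X` satisfies `Xᴴ J X = J` and `det X = 1` iff all
entries of `X` are fixed by `*` and `det X = 1`. -/
theorem stmt14 {S : Type*} [CommRing S] [StarRing S] [IsLocalRing S]
    (hnontriv : ∃ s : S, star s ≠ s)
    (X : Matrix (Fin 2) (Fin 2) S) (hX : IsUnit X) :
    (star X * (!![0, 1; -1, 0] : Matrix (Fin 2) (Fin 2) S) * X = !![0, 1; -1, 0] ∧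
        X.det = 1) ↔
      ((∀ i j, star (X i j) = X i j) ∧ X.det = 1) := by
  obtain ⟨a, b, c, d, hE⟩ : ∃ a b c d, X = !![a, b; c, d] :=
    ⟨X 0 0, X 0 1, X 1 0, X 1 1, Matrix.eta_fin_two X⟩
  subst hE
  have hdet : (!![a, b; c, d] : Matrix (Fin 2) (Fin 2) S).det = a * d - b * c := by
    simp [Matrix.det_fin_two]
  have hstar : star (!![a, b; c, d] : Matrix (Fin 2) (Fin 2) S) =
      !![star a, star c; star b, star d] := by
    rw [Matrix.star_eq_conjTranspose]
    ext i j
    fin_cases i <;> fin_cases j <;> simp [Matrix.conjTranspose_apply]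
  constructor
  · rintro ⟨h1, h2⟩
    refine ⟨?_, h2⟩
    have h2' : a * d - b * c = 1 := by rw [← hdet, h2]
    have hadj : (!![a, b; c, d] : Matrix (Fin 2) (Fin 2) S) * !![d, -b; -c, a] = 1 := by
      rw [Matrix.mul_fin_two]
      have e1 : a * d + b * -c = 1 := by linear_combination h2'
      have e2 : a * -b + b * a = 0 := by ring
      have e3 : c * d + d * -c = 0 := by ring
      have e4 : c * -b + d * a = 1 := by linear_combination h2'
      rw [e1, e2, e3, e4, Matrix.one_fin_two]
    have h3 : star (!![a, b; c, d] : Matrix (Fin 2) (Fin 2) S) * !![0, 1; -1, 0] =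
        !![0, 1; -1, 0] * !![d, -b; -c, a] := by
      calc star (!![a, b; c, d] : Matrix (Fin 2) (Fin 2) S) * !![0, 1; -1, 0]
          = (star (!![a, b; c, d] : Matrix (Fin 2) (Fin 2) S) * !![0, 1; -1, 0] *
              !![a, b; c, d]) * !![d, -b; -c, a] := by
            rw [mul_assoc, hadj, mul_one]
        _ = !![0, 1; -1, 0] * !![d, -b; -c, a] := by rw [h1]
    rw [hstar, Matrix.mul_fin_two, Matrix.mul_fin_two] at h3
    have h4 := Matrix.ext_iff.2 h3
    have e00 := h4 0 0
    have e01 := h4 0 1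
    have e10 := h4 1 0
    have e11 := h4 1 1
    simp only [Matrix.cons_val', Matrix.cons_val_zero, Matrix.cons_val_one,
      Matrix.head_cons, Matrix.head_fin_const, Matrix.of_apply, Matrix.empty_val',
      Matrix.cons_val_fin_one] at e00 e01 e10 e11
    have fa : star a = a := by linear_combination e01
    have fb : star b = b := by linear_combination e11
    have fc : star c = c := by linear_combination -e00
    have fd : star d = d := by linear_combination -e10
    clear h1 h3 h4 e00 e01 e10 e11 hadj hstar hdet
    intro i j
    fin_cases i <;> fin_cases j
    · simpa using fa
    · simpa using fb
    · simpa using fc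
    · simpa using fd
  · rintro ⟨hfix, h2⟩
    refine ⟨?_, h2⟩
    have h2' : a * d - b * c = 1 := by rw [← hdet, h2]
    have hsa : star a = a := by simpa using hfix 0 0
    have hsb : star b = b := by simpa using hfix 0 1
    have hsc : star c = c := by simpa using hfix 1 0
    have hsd : star d = d := by simpa using hfix 1 1
    have s1 : (!![a, c; b, d] : Matrix (Fin 2) (Fin 2) S) * !![0, 1; -1, 0] =
        !![-c, a; -d, b] := by
      rw [Matrix.mul_fin_two]
      have e1 : a * 0 + c * -1 = -c := by ring
      have e2 : a * 1 + c * 0 = a := by ring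
      have e3 : b * 0 + d * -1 = -d := by ring
      have e4 : b * 1 + d * 0 = b := by ring
      rw [e1, e2, e3, e4]
    have s2 : (!![-c, a; -d, b] : Matrix (Fin 2) (Fin 2) S) * !![a, b; c, d] =
        !![0, 1; -1, 0] := by
      rw [Matrix.mul_fin_two]
      have e1 : -c * a + a * c = 0 := by ring
      have e2 : -c * b + a * d = 1 := by linear_combination h2'
      have e3 : -d * a + b * c = -1 := by linear_combination -h2'
      have e4 : -d * b + b * d = 0 := by ring
      rw [e1, e2, e3, e4]
    rw [hstar, hsa, hsb, hsc, hsd, s1, s2]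
end

section
/- (Witt extension) Let S be a commutative local ring with involution, 2 ∈ S^×, and V free of rank 2m with nondegenerate skew hermitian form admitting a symplectic basis. Any symplectic set w₁,z₁,…,w_k,z_k in V with k ≤ m extends to a symplectic basis w₁,z₁,…,w_m,z_m of V. -/
/-!
Adding one pair at a time, it suffices to put a hyperbolic pair `(W, Z)`, orthogonal to the
pairs already fixed, into a symplectic basis `c` without moving those pairs. Since
`h Z W = -1` and `S` is local, some `h (c I) W` is a unit, and `I` is not a fixed index.
With `e = c I` and `F` its partner, the Eichler transformation
`x ↦ x + h e x • u + (h u x + t * h e x) • e` for `u = (h e W)⁻¹ • W - F` and a suitable `t`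
is an isometry fixing everything orthogonal to `e`, `F` and `W`, and it sends `(h e W) • F`
to `W`. Transporting `c` by it makes `W` orthogonal to all basis vectors off the pair `I`.
Projecting those vectors orthogonally to `span {W, Z}`, putting `(W, Z)` in place of the
pair `I` and swapping that pair into the required slot gives a family with the standard Gram
matrix, and such a family is a basis because its matrix in `c` has unit determinant.
-/

variable {S V : Type*} [CommRing S] [StarRing S] [AddCommGroup V] [Module S V]

namespace WittExtension

open Matrix

section Gram

variable {σ : S →+* S} (h : V →ₛₗ[σ] V →ₗ[S] S) {ι : Type*} [Fintype ι]
omit [StarRing S]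

lemma gram_eq_toMatrix_mul [DecidableEq ι] (b : Module.Basis ι S V) (v : ι → V) :
    of (fun i j => h (v i) (v j)) =
      (b.toMatrix v)ᵀ.map σ * of (fun i j => h (b i) (b j)) * b.toMatrix v := by
  ext i j
  rw [of_apply]
  conv_lhs => rw [← b.sum_repr (v i), ← b.sum_repr (v j)]
  simp only [map_sum, map_smulₛₗ, LinearMap.sum_apply, LinearMap.smul_apply, smul_eq_mul,
    RingHom.id_apply, Matrix.mul_apply, Module.Basis.toMatrix_apply, transpose_apply, map_apply,
    of_apply, Finset.sum_mul, Finset.mul_sum]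
  exact Fintype.sum_congr _ _ fun k => Fintype.sum_congr _ _ fun l => by ring

lemma exists_basis_eq_of_gram_eq [DecidableEq ι] (b : Module.Basis ι S V)
    (hb : IsUnit (of fun i j => h (b i) (b j)).det) (v : ι → V)
    (hv : ∀ i j, h (v i) (v j) = h (b i) (b j)) :
    ∃ c : Module.Basis ι S V, ⇑c = v := by
  have hdet : IsUnit (b.det v) := by
    have hgram := congrArg det (gram_eq_toMatrix_mul h b v)
    simp only [hv, det_mul] at hgram
    rw [hgram, mul_comm] at hb
    rw [Module.Basis.det_apply]
    exact isUnit_of_mul_isUnit_left hb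
  obtain ⟨hli, hspan⟩ := b.is_basis_iff_det.2 hdet
  exact ⟨.mk hli hspan.ge, Module.Basis.coe_mk hli hspan.ge⟩

lemma exists_isUnit_apply_basis [IsLocalRing S] (b : Module.Basis ι S V) {y w : V}
    (hyw : IsUnit (h y w)) : ∃ i, IsUnit (h (b i) w) := by
  by_contra! hnon
  refine (IsLocalRing.mem_maximalIdeal _).1 ?_ hyw
  rw [← b.sum_repr y, map_sum, LinearMap.sum_apply]
  refine Ideal.sum_mem _ fun i _ => ?_
  rw [map_smulₛₗ, LinearMap.smul_apply, smul_eq_mul]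
  exact Ideal.mul_mem_left _ _ ((IsLocalRing.mem_maximalIdeal _).2 (hnon i))

end Gram

variable (h : V →ₛₗ[starRingEnd S] V →ₗ[S] S)

def IsSympFamily {m : ℕ} (v : Fin m ⊕ Fin m → V) : Prop :=
  (∀ i j, h (v (.inl i)) (v (.inr j)) = if i = j then 1 else 0) ∧
  (∀ i j, h (v (.inl i)) (v (.inl j)) = 0) ∧
  (∀ i j, h (v (.inr i)) (v (.inr j)) = 0)

def sympPartner {m : ℕ} (v : Fin m ⊕ Fin m → V) : Fin m ⊕ Fin m → V :=
  Sum.elim (fun j => v (.inr j)) (fun j => -v (.inl j))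

def perpProj (W Z : V) : V →ₗ[S] V :=
  LinearMap.id - (h W).smulRight Z + (h Z).smulRight W

lemma perpProj_apply (W Z x : V) : perpProj h W Z x = x - h W x • Z + h Z x • W := rfl

lemma perpProj_eq_self {W Z x : V} (hW : h W x = 0) (hZ : h Z x = 0) :
    perpProj h W Z x = x := by
  simp [perpProj_apply, hW, hZ]

def replacePair {m : ℕ} (v : Fin m ⊕ Fin m → V) (κ : Fin m) (W Z : V) : Fin m ⊕ Fin m → V :=
  Sum.elim (fun i => if i = κ then W else perpProj h W Z (v (.inl i)))
    (fun i => if i = κ then Z else perpProj h W Z (v (.inr i)))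

def eichler (e u : V) (t : S) : V →ₗ[S] V :=
  LinearMap.id + (h e).smulRight u + (h u + t • h e).smulRight e

lemma eichler_apply (e u : V) (t : S) (x : V) :
    eichler h e u t x = x + h e x • u + (h u x + t * h e x) • e := rfl

lemma eichler_eq_self {e u x : V} (t : S) (he : h e x = 0) (hu : h u x = 0) :
    eichler h e u t x = x := by
  simp [eichler_apply, he, hu]

variable {h}

lemma apply_perpProj_fst {W Z : V} (hWZ : h W Z = 1) (hWW : h W W = 0) (x : V) :
    h W (perpProj h W Z x) = 0 := by
  simp [perpProj_apply, hWZ, hWW]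

namespace IsSympFamily

variable {m : ℕ} {v : Fin m ⊕ Fin m → V} (hv : IsSympFamily h v)
include hv

lemma comp_isometry {g : V →ₗ[S] V} (hg : ∀ x y, h (g x) (g y) = h x y) :
    IsSympFamily h (g ∘ v) := by
  simpa only [IsSympFamily, Function.comp_apply, hg] using hv

lemma comp_sumMap (e : Equiv.Perm (Fin m)) : IsSympFamily h (v ∘ Sum.map e e) := by
  refine ⟨fun i j => ?_, fun i j => hv.2.1 _ _, fun i j => hv.2.2 _ _⟩
  simp [hv.1, e.injective.eq_iff]

lemma apply_self (I : Fin m ⊕ Fin m) : h (v I) (v I) = 0 := by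
  rcases I with i | i
  exacts [hv.2.1 i i, hv.2.2 i i]

lemma sympPartner_apply_self (I : Fin m ⊕ Fin m) :
    h (sympPartner v I) (sympPartner v I) = 0 := by
  rcases I with i | i <;> simp [sympPartner, hv.apply_self]

end IsSympFamily

section Skew

variable (hskew : ∀ x y, star (h x y) = -h y x)
include hskew

lemma apply_swap (x y : V) : h y x = -star (h x y) := by
  rw [hskew, neg_neg]

namespace IsSympFamily

variable {m : ℕ} {v : Fin m ⊕ Fin m → V} (hv : IsSympFamily h v)
include hv

lemma inr_inl (i j : Fin m) : h (v (.inr i)) (v (.inl j)) = if i = j then -1 else 0 := by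
  rw [apply_swap hskew, hv.1]
  rcases eq_or_ne i j with rfl | hij
  · simp
  · simp [hij, hij.symm]

lemma gram_eq : of (fun I J => h (v I) (v J)) = (J (Fin m) S)ᵀ := by
  ext (i | i) (j | j) <;>
    simp [J, hv.1, hv.2.1, hv.2.2, hv.inr_inl hskew, one_apply, eq_comm, neg_ite]

lemma apply_eq_zero {I J : Fin m ⊕ Fin m} (hIJ : Sum.elim id id I ≠ Sum.elim id id J) :
    h (v I) (v J) = 0 := by
  rcases I with i | i <;> rcases J with j | j <;>
    simp_all [hv.1, hv.2.1, hv.2.2, hv.inr_inl hskew]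

lemma exists_basis_eq {b : Module.Basis (Fin m ⊕ Fin m) S V} (hb : IsSympBasis h b) :
    ∃ c : Module.Basis (Fin m ⊕ Fin m) S V, ⇑c = v := by
  have hbJ : IsSympFamily h b := hb
  refine exists_basis_eq_of_gram_eq h b ?_ v fun I J => ?_
  · rw [hbJ.gram_eq hskew, det_transpose]
    exact isUnit_det_J _ _
  · rw [← of_apply (fun I J => h (v I) (v J)), hv.gram_eq hskew, ← hbJ.gram_eq hskew, of_apply]

lemma apply_sympPartner_self (I : Fin m ⊕ Fin m) : h (v I) (sympPartner v I) = 1 := by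
  rcases I with i | i <;> simp [sympPartner, hv.1, hv.inr_inl hskew]

lemma apply_sympPartner_of_ne {I J : Fin m ⊕ Fin m}
    (hIJ : Sum.elim id id J ≠ Sum.elim id id I) : h (v J) (sympPartner v I) = 0 := by
  rcases I with i | i <;>
    simp only [sympPartner, Sum.elim_inl, Sum.elim_inr, map_neg, neg_eq_zero] <;>
    exact hv.apply_eq_zero hskew hIJ

lemma sympPartner_apply_of_ne {I J : Fin m ⊕ Fin m}
    (hIJ : Sum.elim id id J ≠ Sum.elim id id I) : h (sympPartner v I) (v J) = 0 := by
  rw [apply_swap hskew, hv.apply_sympPartner_of_ne hskew hIJ, star_zero, neg_zero]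

end IsSympFamily

section perpProj

variable {W Z : V} (hWZ : h W Z = 1)
include hWZ

lemma perpProj_apply_fst (hWW : h W W = 0) (x : V) : h (perpProj h W Z x) W = 0 := by
  rw [apply_swap hskew, apply_perpProj_fst hWZ hWW, star_zero, neg_zero]

lemma apply_perpProj_snd (hZZ : h Z Z = 0) (x : V) : h Z (perpProj h W Z x) = 0 := by
  simp [perpProj_apply, hZZ, apply_swap hskew W Z, hWZ]

lemma perpProj_apply_snd (hZZ : h Z Z = 0) (x : V) : h (perpProj h W Z x) Z = 0 := by
  rw [apply_swap hskew, apply_perpProj_snd hskew hWZ hZZ, star_zero, neg_zero]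

lemma perpProj_perpProj (hWW : h W W = 0) (hZZ : h Z Z = 0) {x y : V} (hx : h x W = 0)
    (hy : h W y = 0) : h (perpProj h W Z x) (perpProj h W Z y) = h x y := by
  rw [perpProj_apply h W Z x]
  simp only [map_add, map_sub, map_smulₛₗ, LinearMap.add_apply, LinearMap.sub_apply,
    LinearMap.smul_apply, apply_perpProj_fst hWZ hWW, apply_perpProj_snd hskew hWZ hZZ,
    smul_zero, sub_zero, add_zero]
  simp [perpProj_apply, hx, hy]

end perpProj

lemma IsSympFamily.replacePair {m : ℕ} {v : Fin m ⊕ Fin m → V} (hv : IsSympFamily h v)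
    {κ : Fin m} {W Z : V} (hWZ : h W Z = 1) (hWW : h W W = 0) (hZZ : h Z Z = 0)
    (hW : ∀ I, Sum.elim id id I ≠ κ → h (v I) W = 0) :
    IsSympFamily h (replacePair h v κ W Z) := by
  have hππ : ∀ I J, Sum.elim id id I ≠ κ → Sum.elim id id J ≠ κ →
      h (perpProj h W Z (v I)) (perpProj h W Z (v J)) = h (v I) (v J) := fun I J hI hJ =>
    perpProj_perpProj hskew hWZ hWW hZZ (hW I hI) <| by
      rw [apply_swap hskew, hW J hJ, star_zero, neg_zero]
  refine ⟨fun i j => ?_, fun i j => ?_, fun i j => ?_⟩ <;>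
    simp only [WittExtension.replacePair, Sum.elim_inl, Sum.elim_inr] <;> split_ifs
  all_goals subst_vars
  all_goals first
    | exact absurd rfl ‹_›
    | rw [hππ _ _ (by assumption) (by assumption)]; simp [*, hv.1, hv.2.1, hv.2.2]
    | simp [*, apply_perpProj_fst hWZ hWW, apply_perpProj_snd hskew hWZ hZZ,
        perpProj_apply_fst hskew hWZ hWW, perpProj_apply_snd hskew hWZ hZZ]

lemma eichler_isometry {e u : V} {t : S} (hee : h e e = 0) (heu : h e u = 0)
    (ht : star t - t = -h u u) (x y : V) :
    h (eichler h e u t x) (eichler h e u t y) = h x y := by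
  have hue : h u e = 0 := by rw [apply_swap hskew, heu, star_zero, neg_zero]
  simp only [eichler_apply, map_add, map_smulₛₗ, LinearMap.add_apply, LinearMap.smul_apply,
    smul_eq_mul, starRingEnd_apply, RingHom.id_apply, hee, heu, hue]
  rw [apply_swap hskew u x, apply_swap hskew e x, star_mul]
  linear_combination (star (h e x) * h e y) * ht

lemma exists_isometry_apply_smul_eq {X : Set V} {E F W : V} (hEE : h E E = 0)
    (hFF : h F F = 0) (hEF : h E F = 1) (hEX : ∀ x ∈ X, h E x = 0)
    (hFX : ∀ x ∈ X, h F x = 0) (hWX : ∀ x ∈ X, h W x = 0) (hWW : h W W = 0)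
    (hEW : IsUnit (h E W)) :
    ∃ g : V →ₗ[S] V, (∀ x y, h (g x) (g y) = h x y) ∧ (∀ x ∈ X, g x = x) ∧
      g (h E W • F) = W := by
  obtain ⟨u, hu⟩ := hEW
  have hWF : h W F = -star (h F W) := apply_swap hskew F W
  set v : V := (↑u⁻¹ : S) • W - F
  set t : S := star (h F W * ↑u⁻¹)
  have hEv : h E v = 0 := by
    simp [v, ← hu, hEF]
  have hvv : h v v = star (↑u⁻¹ : S) * star (h F W) - ↑u⁻¹ * h F W := by
    simp [v, hWW, hFF, hWF, starRingEnd_apply]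
  have hvF : h v F = -(star (↑u⁻¹ : S) * star (h F W)) := by
    simp [v, hFF, hWF, starRingEnd_apply]
  -- `t` makes the `E`-coefficient of the image of `u • F` vanish; the isometry condition
  -- `star t - t = -h v v` then holds because `W` is isotropic.
  refine ⟨eichler h E v t, eichler_isometry hskew hEE hEv ?_, fun x hx => ?_, ?_⟩
  · simp only [t, hvv, star_mul, star_star]
    ring
  · refine eichler_eq_self h t (hEX x hx) ?_
    simp [v, hWX x hx, hFX x hx]
  · simp only [eichler_apply, map_smul, hvF, hEF, mul_one, ← hu, v, smul_sub, smul_smul,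
      t, star_mul]
    match_scalars <;> simp

variable [IsLocalRing S]

lemma exists_isometry_apply_orthogonal {m : ℕ} {c₀ : Module.Basis (Fin m ⊕ Fin m) S V}
    (hc₀ : IsSympBasis h c₀) {A : Set (Fin m)} {W Z : V} (hWZ : h W Z = 1) (hWW : h W W = 0)
    (hW : ∀ I, Sum.elim id id I ∈ A → h (c₀ I) W = 0) :
    ∃ j ∉ A, ∃ g : V →ₗ[S] V, (∀ x y, h (g x) (g y) = h x y) ∧
      (∀ I, Sum.elim id id I ∈ A → g (c₀ I) = c₀ I) ∧
      ∀ I, Sum.elim id id I ≠ j → h (g (c₀ I)) W = 0 := by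
  have hc : IsSympFamily h c₀ := hc₀
  obtain ⟨I, hI⟩ := exists_isUnit_apply_basis h c₀ (y := Z) (w := W) (by
    rw [apply_swap hskew, hWZ, star_one]
    exact isUnit_one.neg)
  have hIA : Sum.elim id id I ∉ A := fun hIA => not_isUnit_zero (hW I hIA ▸ hI)
  set X := c₀ '' {J | Sum.elim id id J ∈ A}
  have hX : ∀ x ∈ X, ∀ y, (∀ J, Sum.elim id id J ≠ Sum.elim id id I → h y (c₀ J) = 0) →
      h y x = 0 := by
    rintro _ ⟨J, hJ, rfl⟩ y hy
    exact hy J fun hJI => hIA (hJI ▸ hJ)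
  obtain ⟨g, hg, hgX, hgW⟩ := exists_isometry_apply_smul_eq hskew (X := X)
    (hc.apply_self I) (hc.sympPartner_apply_self I) (hc.apply_sympPartner_self hskew I)
    (fun x hx => hX x hx _ fun J hJ => hc.apply_eq_zero hskew (Ne.symm hJ))
    (fun x hx => hX x hx _ fun J hJ => hc.sympPartner_apply_of_ne hskew hJ)
    (fun x hx => by
      obtain ⟨J, hJ, rfl⟩ := hx
      rw [apply_swap hskew, hW J hJ, star_zero, neg_zero]) hWW hI
  refine ⟨_, hIA, g, hg, fun J hJ => hgX _ ⟨J, hJ, rfl⟩, fun J hJ => ?_⟩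
  rw [← hgW, hg, map_smul, hc.apply_sympPartner_of_ne hskew hJ, smul_zero]

lemma exists_sympBasis_extend {m : ℕ} {c₀ : Module.Basis (Fin m ⊕ Fin m) S V}
    (hc₀ : IsSympBasis h c₀) {A : Set (Fin m)} {κ : Fin m} (hκ : κ ∉ A) {W Z : V}
    (hWZ : h W Z = 1) (hWW : h W W = 0) (hZZ : h Z Z = 0)
    (hW : ∀ I, Sum.elim id id I ∈ A → h (c₀ I) W = 0)
    (hZ : ∀ I, Sum.elim id id I ∈ A → h (c₀ I) Z = 0) :
    ∃ c : Module.Basis (Fin m ⊕ Fin m) S V, IsSympBasis h c ∧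
      (∀ I, Sum.elim id id I ∈ A → c I = c₀ I) ∧ c (.inl κ) = W ∧ c (.inr κ) = Z := by
  obtain ⟨j, hjA, g, hg, hgA, hgW⟩ :=
    exists_isometry_apply_orthogonal hskew hc₀ hWZ hWW hW
  have hv : IsSympFamily h (g ∘ c₀) := IsSympFamily.comp_isometry (v := c₀) hc₀ hg
  set σ := Equiv.swap j κ
  have hfam := (hv.replacePair hskew hWZ hWW hZZ hgW).comp_sumMap σ
  obtain ⟨c, hc⟩ := hfam.exists_basis_eq hskew hc₀
  refine ⟨c, show IsSympFamily h c from hc ▸ hfam, fun I hI => ?_, ?_, ?_⟩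
  · have hIj : Sum.elim id id I ≠ j := fun hIj => hjA (hIj ▸ hI)
    have hIκ : Sum.elim id id I ≠ κ := fun hIκ => hκ (hIκ ▸ hI)
    have hWI : h W (c₀ I) = 0 := by rw [apply_swap hskew, hW I hI, star_zero, neg_zero]
    have hZI : h Z (c₀ I) = 0 := by rw [apply_swap hskew, hZ I hI, star_zero, neg_zero]
    have hπ : perpProj h W Z (g (c₀ I)) = c₀ I := by rw [hgA I hI, perpProj_eq_self h hWI hZI]
    rcases I with i | i <;> simp only [Sum.elim_inl, Sum.elim_inr, id] at hIj hIκ <;>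
      simpa [hc, σ, replacePair, Equiv.swap_apply_of_ne_of_ne hIj hIκ, hIj] using hπ
  · simp [hc, σ, replacePair]
  · simp [hc, σ, replacePair]

theorem exists_sympBasis_extend_of_injective {m : ℕ} {b : Module.Basis (Fin m ⊕ Fin m) S V}
    (hb : IsSympBasis h b) {ι : Type*} [Finite ι] [DecidableEq ι] {e : ι → Fin m}
    (he : Function.Injective e) {w z : ι → V}
    (hwz : ∀ i j, h (w i) (z j) = if i = j then 1 else 0)
    (hww : ∀ i j, h (w i) (w j) = 0) (hzz : ∀ i j, h (z i) (z j) = 0) :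
    ∃ c : Module.Basis (Fin m ⊕ Fin m) S V, IsSympBasis h c ∧
      ∀ i, c (.inl (e i)) = w i ∧ c (.inr (e i)) = z i := by
  have hzw : ∀ i j, i ≠ j → h (z i) (w j) = 0 := fun i j hij => by
    rw [apply_swap hskew, hwz, if_neg hij.symm, star_zero, neg_zero]
  cases nonempty_fintype ι
  suffices ∀ s : Finset ι, ∃ c : Module.Basis (Fin m ⊕ Fin m) S V, IsSympBasis h c ∧
      ∀ i ∈ s, c (.inl (e i)) = w i ∧ c (.inr (e i)) = z i by
    obtain ⟨c, hc, hcs⟩ := this Finset.univ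
    exact ⟨c, hc, fun i => hcs i (Finset.mem_univ i)⟩
  intro s
  induction s using Finset.induction_on with
  | empty => exact ⟨b, hb, by simp⟩
  | insert a s ha ih =>
    obtain ⟨c₀, hc₀, hs⟩ := ih
    have hsa : ∀ i ∈ s, i ≠ a := fun i hi hia => ha (hia ▸ hi)
    have hmem : ∀ I, Sum.elim id id I ∈ e '' s → ∃ i ∈ s, c₀ I = w i ∨ c₀ I = z i := by
      rintro (j | j) ⟨i, hi, rfl⟩
      exacts [⟨i, hi, .inl (hs i hi).1⟩, ⟨i, hi, .inr (hs i hi).2⟩]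
    obtain ⟨c, hc, hcs, hcw, hcz⟩ := exists_sympBasis_extend hskew hc₀
      (A := e '' s) (κ := e a) (by simpa [he.eq_iff] using ha) (hwz a a ▸ if_pos rfl)
      (hww a a) (hzz a a)
      (fun I hI => by
        obtain ⟨i, hi, hI | hI⟩ := hmem I hI
        · rw [hI, hww]
        · rw [hI, hzw i a (hsa i hi)])
      (fun I hI => by
        obtain ⟨i, hi, hI | hI⟩ := hmem I hI
        · rw [hI, hwz, if_neg (hsa i hi)]
        · rw [hI, hzz])
    refine ⟨c, hc, fun i hi => ?_⟩
    rcases Finset.mem_insert.1 hi with rfl | hi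
    · exact ⟨hcw, hcz⟩
    · rw [hcs (.inl (e i)) ⟨i, hi, rfl⟩, hcs (.inr (e i)) ⟨i, hi, rfl⟩]
      exact hs i hi

end Skew

end WittExtension

theorem stmt17_general [IsLocalRing S] {m : ℕ}
    (h : V →ₛₗ[starRingEnd S] V →ₗ[S] S)
    (hskew : ∀ x y, star (h x y) = - h y x)
    (b : Module.Basis (Fin m ⊕ Fin m) S V) (hb : IsSympBasis h b)
    (k : ℕ) (hk : k ≤ m) (w z : Fin k → V)
    (hwz : ∀ i j, h (w i) (z j) = if i = j then 1 else 0)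
    (hww : ∀ i j, h (w i) (w j) = 0)
    (hzz : ∀ i j, h (z i) (z j) = 0) :
    ∃ c : Module.Basis (Fin m ⊕ Fin m) S V, IsSympBasis h c ∧
      ∀ i : Fin k, c (.inl (Fin.castLE hk i)) = w i ∧ c (.inr (Fin.castLE hk i)) = z i :=
  WittExtension.exists_sympBasis_extend_of_injective hskew hb (Fin.castLE_injective hk) hwz hww
    hzz

/-- Witt extension: a symplectic set `w₁,z₁,…,w_k,z_k` with `k ≤ m`
extends to a symplectic basis of `V`. -/
theorem stmt17 [IsLocalRing S] {m : ℕ} (h2 : IsUnit (2 : S))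
    (h : V →ₛₗ[starRingEnd S] V →ₗ[S] S)
    (hskew : ∀ x y, star (h x y) = - h y x)
    (hnd : ∀ x, (∀ y, h x y = 0) → x = 0)
    (b : Module.Basis (Fin m ⊕ Fin m) S V) (hb : IsSympBasis h b)
    (k : ℕ) (hk : k ≤ m) (w z : Fin k → V)
    (hwz : ∀ i j, h (w i) (z j) = if i = j then 1 else 0)
    (hww : ∀ i j, h (w i) (w j) = 0)
    (hzz : ∀ i j, h (z i) (z j) = 0) :
    ∃ c : Module.Basis (Fin m ⊕ Fin m) S V, IsSympBasis h c ∧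
      ∀ i : Fin k, c (.inl (Fin.castLE hk i)) = w i ∧ c (.inr (Fin.castLE hk i)) = z i :=
  stmt17_general h hskew b hb k hk w z hwz hww hzz
end

section
/- Let S be a commutative local ring with involution * in which 2 is a unit, with maximal ideal 𝔧. Suppose a ∈ S satisfies a*a = 1, and suppose either that the involution is unramified (there exists i ∈ S^× with i* = -i) or that a ≢ -1 mod 𝔧. Then there exists b ∈ S^× with a = b (b*)⁻¹. -/
/-- in a commutative local ring `S` with involution in which `2` is a
unit, if `a* a = 1` and either the involution is unramified (some unit `i` has
`i* = -i`) or `a ≢ -1` mod the maximal ideal, then `a = b (b*)⁻¹` for some unit `b`. -/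
theorem stmt18 {S : Type*} [CommRing S] [StarRing S] [IsLocalRing S]
    (h2 : IsUnit (2 : S)) (a : S) (ha : star a * a = 1)
    (hcase : (∃ i : S, IsUnit i ∧ star i = -i) ∨ a + 1 ∉ IsLocalRing.maximalIdeal S) :
    ∃ b : Sˣ, a = (b : S) * (((star b)⁻¹ : Sˣ) : S) := by
  by_cases h1 : IsUnit (a + 1)
  · refine ⟨h1.unit, ?_⟩
    rw [Units.eq_mul_inv_iff_mul_eq]
    have hc : ((star h1.unit : Sˣ) : S) = star (a + 1) := by
      rw [Units.coe_star, IsUnit.unit_spec]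
    rw [hc, IsUnit.unit_spec, star_add, star_one]
    linear_combination ha
  · have hmem : a + 1 ∈ IsLocalRing.maximalIdeal S := by
      rwa [IsLocalRing.mem_maximalIdeal, mem_nonunits_iff]
    obtain ⟨i, hi, hsi⟩ := hcase.resolve_right (fun h => h hmem)
    have h3 : IsUnit (a - 1) := by
      by_contra h3
      have hmem2 : a - 1 ∈ IsLocalRing.maximalIdeal S := by
        rwa [IsLocalRing.mem_maximalIdeal, mem_nonunits_iff]
      have : (2 : S) ∈ IsLocalRing.maximalIdeal S := by
        have h22 := Ideal.sub_mem _ hmem hmem2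
        have : a + 1 - (a - 1) = 2 := by ring
        rwa [this] at h22
      exact (IsLocalRing.maximalIdeal.isMaximal S).ne_top
        (Ideal.eq_top_of_isUnit_mem _ this h2)
    refine ⟨(hi.mul h3).unit, ?_⟩
    rw [Units.eq_mul_inv_iff_mul_eq]
    have hc : ((star (hi.mul h3).unit : Sˣ) : S) = star (i * (a - 1)) := by
      rw [Units.coe_star, IsUnit.unit_spec]
    rw [hc, IsUnit.unit_spec, star_mul, star_sub, star_one, hsi]
    linear_combination (-i) * ha
end
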